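/- arXiv:2402.03974 — 5 statements merged into one kernel-verified Lean document; each statement's English description precedes it below -/
import Mathlib

section
/- Let f : (0,∞) → ℝ be locally integrable on (0,∞), locally of bounded variation on (0,∞), with f(t) → 0 as t → ∞, and suppose f is general monotone with constants C > 1 and λ = 2^ν. If the improper integral ∫_1^∞ f(t) dt converges (i.e., the limit of ∫_1^N f(t) dt exists as N → ∞), then t·f(t) → 0 as t → ∞. -/
/-!
Write `W(x) = x · Var(f, [x, 2x])`. Since `x f(x) = ∫_x^{2x} f + ∫_x^{2x} (f(x) - f(t)) dt`,
`|x f(x)| ≤ |∫_x^{2x} f| + W(x)`, and the first term tends to `0` because `∫_1^∞ f` converges;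
so it suffices to show `W(x) → 0`.

The GM condition gives `W(z) ≤ C λ ∫_{z/λ}^{λz} |f|`. Cut `[z/λ, λz]` into `2ν` dyadic blocks
`[w, 2w]` and each block into `n` equal pieces. On a piece where `f` changes sign, `|f|` is
bounded by the variation of `f` on that piece; otherwise `∫ |f| = |∫ f|`. Summing,
`W(z) ≤ K (n ε + sup_{[z/λ, λz]} W / n)` with `K = 2 C λ ν`, where `ε` bounds the tails
`|∫_a^b f|`, `b ≥ a ≥ z/λ`. Since `f` is eventually bounded, `W(z) = O(z)`; iterating the
inequality with one large `n` improves this to `W = O(1)`, and then taking `n` large and `ε`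
small gives `W → 0`.
-/

open MeasureTheory Filter Set

/-- `f : (0,∞) → ℝ` is general monotone with constants `C` and `l`: locally of bounded
variation on `(0,∞)`, vanishing at infinity, and for every `x > 0` the total variation of `f`
over `[x, 2x]` is at most `C · ∫_{x/l}^{lx} |f(t)|/t dt`. -/
def GMFun (C l : ℝ) (f : ℝ → ℝ) : Prop :=
  LocallyBoundedVariationOn f (Set.Ioi 0) ∧
  Filter.Tendsto f Filter.atTop (nhds 0) ∧
  ∀ x > (0:ℝ), eVariationOn f (Set.Icc x (2*x)) ≤
    ENNReal.ofReal (C * ∫ t in Set.Ioo (x/l) (l*x), |f t| / t)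

theorem MeasureTheory.LocallyIntegrableOn.intervalIntegrable_of_Icc_subset {E : Type*}
    [NormedAddCommGroup E] {f : ℝ → E} {s : Set ℝ} (hf : LocallyIntegrableOn f s) {a b : ℝ}
    (hab : a ≤ b) (h : Icc a b ⊆ s) : IntervalIntegrable f volume a b :=
  (intervalIntegrable_iff_integrableOn_Icc_of_le hab).2
    (hf.integrableOn_compact_subset h isCompact_Icc)

theorem LocallyBoundedVariationOn.boundedVariationOn_Icc {α E : Type*} [LinearOrder α]
    [PseudoEMetricSpace E] {f : α → E} {s : Set α} (hf : LocallyBoundedVariationOn f s)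
    {a b : α} (hab : a ≤ b) (h : Icc a b ⊆ s) : BoundedVariationOn f (Icc a b) := by
  simpa [inter_eq_right.2 h] using hf a b (h ⟨le_rfl, hab⟩) (h ⟨hab, le_rfl⟩)

theorem integral_abs_le_abs_integral_add_mul {f : ℝ → ℝ} {a b D : ℝ} (hab : a ≤ b)
    (hf : IntervalIntegrable f volume a b)
    (hosc : ∀ s ∈ Icc a b, ∀ t ∈ Icc a b, f s - f t ≤ D) :
    ∫ t in a..b, |f t| ≤ |∫ t in a..b, f t| + (b - a) * D := by
  have hD : 0 ≤ D := by simpa using hosc a ⟨le_rfl, hab⟩ a ⟨le_rfl, hab⟩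
  have hba : 0 ≤ (b - a) * D := mul_nonneg (sub_nonneg.2 hab) hD
  by_cases hnonneg : ∀ t ∈ Icc a b, 0 ≤ f t
  · have : ∫ t in a..b, |f t| = ∫ t in a..b, f t :=
      intervalIntegral.integral_congr fun t ht ↦ abs_of_nonneg (hnonneg t (uIcc_of_le hab ▸ ht))
    linarith [le_abs_self (∫ t in a..b, f t)]
  by_cases hnonpos : ∀ t ∈ Icc a b, f t ≤ 0
  · have : ∫ t in a..b, |f t| = -∫ t in a..b, f t := by
      rw [← intervalIntegral.integral_neg]
      exact intervalIntegral.integral_congr fun t ht ↦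
        abs_of_nonpos (hnonpos t (uIcc_of_le hab ▸ ht))
    linarith [neg_le_abs (∫ t in a..b, f t)]
  push Not at hnonneg hnonpos
  obtain ⟨s, hs, hfs⟩ := hnonneg
  obtain ⟨t, ht, hft⟩ := hnonpos
  -- `f` changes sign on `[a, b]`, so `|f|` is bounded by its oscillation there.
  have hbound : ∀ x ∈ Icc a b, |f x| ≤ D := fun x hx ↦
    abs_le.2 ⟨by linarith [hosc t ht x hx], by linarith [hosc x hx s hs]⟩
  have := intervalIntegral.integral_mono_on hab hf.abs intervalIntegrable_const hbound
  rw [intervalIntegral.integral_const, smul_eq_mul] at this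
  linarith [abs_nonneg (∫ t in a..b, f t)]

theorem integral_abs_le_mul_add_variation {f : ℝ → ℝ} {u v ε : ℝ} {n : ℕ} (hn : 0 < n)
    (huv : u ≤ v) (hf : IntervalIntegrable f volume u v) (hbv : BoundedVariationOn f (Icc u v))
    (hcau : ∀ a b, u ≤ a → a ≤ b → b ≤ v → |∫ t in a..b, f t| ≤ ε) :
    ∫ t in u..v, |f t| ≤ n * ε + (v - u) / n * (eVariationOn f (Icc u v)).toReal := by
  set h := (v - u) / n
  set g : ℕ → ℝ := fun i ↦ u + i * h
  have hg : Monotone g := fun i j hij ↦ by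
    have : 0 ≤ h := div_nonneg (sub_nonneg.2 huv) n.cast_nonneg
    simp only [g]; gcongr
  have hg0 : g 0 = u := by simp [g]
  have hgn : g n = v := by simp only [g, h]; field_simp; ring
  have hmem : ∀ i ≤ n, g i ∈ Icc u v := fun i hi ↦ ⟨hg0 ▸ hg i.zero_le, hgn ▸ hg hi⟩
  have hsub : ∀ i < n, Icc (g i) (g (i + 1)) ⊆ Icc u v := fun i hi ↦
    Icc_subset_Icc (hmem i hi.le).1 (hmem (i + 1) hi).2
  have hfi : ∀ i < n, IntervalIntegrable f volume (g i) (g (i + 1)) := fun i hi ↦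
    hf.mono_set (by rw [uIcc_of_le huv, uIcc_of_le (hg i.le_succ)]; exact hsub i hi)
  have hpiece : ∀ i < n, ∫ t in g i..g (i + 1), |f t| ≤
      ε + h * (eVariationOn f (Icc (g i) (g (i + 1)))).toReal := by
    intro i hi
    have hstep : g (i + 1) - g i = h := by simp only [g]; push_cast; ring
    have := integral_abs_le_abs_integral_add_mul (hg i.le_succ) (hfi i hi)
      fun s hs t ht ↦ (hbv.mono (hsub i hi)).sub_le hs ht
    rw [hstep] at this
    linarith [hcau _ _ (hmem i hi.le).1 (hg i.le_succ) (hmem (i + 1) hi).2]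
  have hvar : ∑ i ∈ Finset.range n, (eVariationOn f (Icc (g i) (g (i + 1)))).toReal =
      (eVariationOn f (Icc u v)).toReal := by
    rw [← ENNReal.toReal_sum fun i hi ↦ hbv.mono (hsub i (Finset.mem_range.1 hi)),
      eVariationOn.sum' f hg, hg0, hgn]
  have hint : ∀ i < n, IntervalIntegrable (fun t ↦ |f t|) volume (g i) (g (i + 1)) :=
    fun i hi ↦ (hfi i hi).abs
  calc ∫ t in u..v, |f t| = ∑ i ∈ Finset.range n, ∫ t in g i..g (i + 1), |f t| := by
        rw [intervalIntegral.sum_integral_adjacent_intervals hint, hg0, hgn]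
    _ ≤ ∑ i ∈ Finset.range n, (ε + h * (eVariationOn f (Icc (g i) (g (i + 1)))).toReal) :=
        Finset.sum_le_sum fun i hi ↦ hpiece i (Finset.mem_range.1 hi)
    _ = n * ε + h * (eVariationOn f (Icc u v)).toReal := by
        rw [Finset.sum_add_distrib, ← Finset.mul_sum, hvar]; simp

theorem abs_mul_le_abs_integral_add_variation {f : ℝ → ℝ} {a b : ℝ} (hab : a ≤ b)
    (hf : IntervalIntegrable f volume a b) (hbv : BoundedVariationOn f (Icc a b)) :
    |(b - a) * f a| ≤ |∫ t in a..b, f t| + (b - a) * (eVariationOn f (Icc a b)).toReal := by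
  have hsplit : (b - a) * f a = (∫ t in a..b, f t) + ∫ t in a..b, (f a - f t) := by
    rw [intervalIntegral.integral_sub intervalIntegrable_const hf,
      intervalIntegral.integral_const, smul_eq_mul]
    ring
  have hosc : ‖∫ t in a..b, (f a - f t)‖ ≤ (eVariationOn f (Icc a b)).toReal * |b - a| :=
    intervalIntegral.norm_integral_le_of_norm_le_const fun t ht ↦ by
      rw [uIoc_of_le hab] at ht
      exact hbv.dist_le ⟨le_rfl, hab⟩ (Ioc_subset_Icc_self ht)
  rw [Real.norm_eq_abs, abs_of_nonneg (sub_nonneg.2 hab)] at hosc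
  rw [hsplit]
  exact (abs_add_le _ _).trans (by linarith)

noncomputable def dyadicVariation (f : ℝ → ℝ) (x : ℝ) : ℝ :=
  x * (eVariationOn f (Icc x (2 * x))).toReal

theorem dyadicVariation_nonneg (f : ℝ → ℝ) {x : ℝ} (hx : 0 ≤ x) : 0 ≤ dyadicVariation f x :=
  mul_nonneg hx ENNReal.toReal_nonneg

theorem dyadicVariation_le_integral_abs {f : ℝ → ℝ} {C l z : ℝ} (hC : 0 ≤ C) (hl : 1 ≤ l)
    (hz : 0 < z) (hf : IntegrableOn f (Icc (z / l) (l * z)))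
    (hvar : eVariationOn f (Icc z (2 * z)) ≤
      ENNReal.ofReal (C * ∫ t in Ioo (z / l) (l * z), |f t| / t)) :
    dyadicVariation f z ≤ C * l * ∫ t in z / l..l * z, |f t| := by
  have hl0 : 0 < l := one_pos.trans_le hl
  have hzl : 0 < z / l := div_pos hz hl0
  have hlz : z / l ≤ l * z :=
    (div_le_self hz.le hl).trans (le_mul_of_one_le_left hz.le hl)
  have hweight : ∫ t in Ioo (z / l) (l * z), |f t| / t ≤
      ∫ t in Ioo (z / l) (l * z), l / z * |f t| := by
    refine setIntegral_mono_of_nonneg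
      (fun t ht ↦ div_nonneg (abs_nonneg _) (hzl.trans ht.1).le) (fun t ht ↦ ?_)
      ((hf.mono_set Ioo_subset_Icc_self).abs.const_mul _)
    rw [div_eq_mul_inv, mul_comm]
    refine mul_le_mul_of_nonneg_right (inv_le_of_inv_le₀ (div_pos hl0 hz) ?_) (abs_nonneg _)
    rw [inv_div]
    exact ht.1.le
  have hIoo : ∫ t in Ioo (z / l) (l * z), |f t| = ∫ t in z / l..l * z, |f t| := by
    rw [intervalIntegral.integral_of_le hlz, integral_Ioc_eq_integral_Ioo]
  rw [integral_const_mul, hIoo] at hweight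
  have hnonneg : 0 ≤ ∫ t in Ioo (z / l) (l * z), |f t| / t :=
    setIntegral_nonneg measurableSet_Ioo fun t ht ↦
      div_nonneg (abs_nonneg _) (hzl.trans ht.1).le
  have hV := ENNReal.toReal_le_of_le_ofReal (mul_nonneg hC hnonneg) hvar
  calc dyadicVariation f z ≤ z * (C * (l / z * ∫ t in z / l..l * z, |f t|)) :=
        mul_le_mul_of_nonneg_left (hV.trans (mul_le_mul_of_nonneg_left hweight hC)) hz.le
    _ = C * l * ∫ t in z / l..l * z, |f t| := by field_simp

theorem integral_abs_le_of_dyadicVariation_le {f : ℝ → ℝ}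
    (hloc : LocallyIntegrableOn f (Ioi 0)) (hbv : LocallyBoundedVariationOn f (Ioi 0))
    {ν n : ℕ} (hn : 0 < n) {z ε M : ℝ} (hz : 0 < z)
    (hcau : ∀ a, z / 2 ^ ν ≤ a → ∀ b, a ≤ b → |∫ t in a..b, f t| ≤ ε)
    (hM : ∀ w, z / 2 ^ ν ≤ w → w ≤ 2 ^ ν * z → dyadicVariation f w ≤ M) :
    ∫ t in z / 2 ^ ν..2 ^ ν * z, |f t| ≤ 2 * ν * (n * ε + M / n) := by
  set u : ℕ → ℝ := fun j ↦ 2 ^ j * (z / 2 ^ ν)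
  have hu0 : u 0 = z / 2 ^ ν := by simp [u]
  have hu : Monotone u := fun i j hij ↦
    mul_le_mul_of_nonneg_right (pow_le_pow_right₀ one_le_two hij) (by positivity)
  have hupos : ∀ j, 0 < u j := fun j ↦ by positivity
  have husucc : ∀ j, u (j + 1) = 2 * u j := fun j ↦ by simp only [u]; ring
  have hu2ν : u (2 * ν) = 2 ^ ν * z := by simp only [u]; rw [two_mul, pow_add]; field_simp
  have hblock : ∀ j < 2 * ν, ∫ t in u j..u (j + 1), |f t| ≤ n * ε + M / n := by
    intro j hj
    have h2u : u j ≤ 2 * u j := by linarith [hupos j]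
    have hIcc : Icc (u j) (2 * u j) ⊆ Ioi 0 := (Icc_subset_Ioi_iff h2u).2 (hupos j)
    have h := integral_abs_le_mul_add_variation hn h2u
      (hloc.intervalIntegrable_of_Icc_subset h2u hIcc) (hbv.boundedVariationOn_Icc h2u hIcc)
      fun a b ha hab _ ↦ hcau a (hu0 ▸ (hu j.zero_le).trans ha) b hab
    have hW := hM (u j) (hu0 ▸ hu j.zero_le) (hu2ν ▸ hu hj.le)
    rw [husucc]
    calc ∫ t in u j..2 * u j, |f t|
        ≤ n * ε + (2 * u j - u j) / n * (eVariationOn f (Icc (u j) (2 * u j))).toReal := h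
      _ = n * ε + dyadicVariation f (u j) / n := by rw [dyadicVariation]; ring
      _ ≤ n * ε + M / n := by gcongr
  have hint : ∀ j < 2 * ν, IntervalIntegrable (fun t ↦ |f t|) volume (u j) (u (j + 1)) :=
    fun j _ ↦ (hloc.intervalIntegrable_of_Icc_subset (hu j.le_succ)
      ((Icc_subset_Ioi_iff (hu j.le_succ)).2 (hupos j))).abs
  calc ∫ t in z / 2 ^ ν..2 ^ ν * z, |f t|
        = ∑ j ∈ Finset.range (2 * ν), ∫ t in u j..u (j + 1), |f t| := by
        rw [intervalIntegral.sum_integral_adjacent_intervals hint, hu0, hu2ν]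
    _ ≤ ∑ _j ∈ Finset.range (2 * ν), (n * ε + M / n) :=
        Finset.sum_le_sum fun j hj ↦ hblock j (Finset.mem_range.1 hj)
    _ = 2 * ν * (n * ε + M / n) := by simp; ring

theorem dyadicVariation_le_of_window_le {f : ℝ → ℝ} (hloc : LocallyIntegrableOn f (Ioi 0))
    (hbv : LocallyBoundedVariationOn f (Ioi 0)) {C : ℝ} (hC : 0 ≤ C) {ν n : ℕ} (hn : 0 < n)
    {z ε M : ℝ} (hz : 0 < z)
    (hvar : eVariationOn f (Icc z (2 * z)) ≤
      ENNReal.ofReal (C * ∫ t in Ioo (z / 2 ^ ν) (2 ^ ν * z), |f t| / t))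
    (hcau : ∀ a, z / 2 ^ ν ≤ a → ∀ b, a ≤ b → |∫ t in a..b, f t| ≤ ε)
    (hM : ∀ w, z / 2 ^ ν ≤ w → w ≤ 2 ^ ν * z → dyadicVariation f w ≤ M) :
    dyadicVariation f z ≤ C * 2 ^ ν * (2 * ν) * (n * ε + M / n) := by
  have hl : (1 : ℝ) ≤ 2 ^ ν := one_le_pow₀ one_le_two
  have hIcc : Icc (z / 2 ^ ν) (2 ^ ν * z) ⊆ Ioi 0 := fun t ht ↦
    (by positivity : (0 : ℝ) < z / 2 ^ ν).trans_le ht.1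
  calc dyadicVariation f z ≤ C * 2 ^ ν * ∫ t in z / 2 ^ ν..2 ^ ν * z, |f t| :=
        dyadicVariation_le_integral_abs hC hl hz
          (hloc.integrableOn_compact_subset hIcc isCompact_Icc) hvar
    _ ≤ C * 2 ^ ν * (2 * ν * (n * ε + M / n)) := by
        gcongr
        exact integral_abs_le_of_dyadicVariation_le hloc hbv hn hz hcau hM
    _ = C * 2 ^ ν * (2 * ν) * (n * ε + M / n) := by ring

theorem le_of_le_add_mul_window {W : ℝ → ℝ} {l a A B q : ℝ} (hl : 1 < l) (ha : 0 < a)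
    (hA : 0 ≤ A) (hB : 0 ≤ B) (hql : 2 * q * l ^ 2 ≤ 1)
    (hlin : ∀ z, a ≤ z → W z ≤ B * z)
    (hrec : ∀ z M, l * a ≤ z → (∀ w, z / l ≤ w → w ≤ l * z → W w ≤ M) → W z ≤ A + q * M)
    {z : ℝ} (hz : a ≤ z) : W z ≤ 2 * A + B * l ^ 2 * a := by
  have hl0 : 0 < l := one_pos.trans hl
  -- Each application of `hrec` divides the slope of the linear bound by `2 l`, at the cost of
  -- raising the threshold by a factor `l`.
  have key : ∀ k : ℕ, ∀ z, l ^ k * a ≤ z → W z ≤ 2 * A + B * l * z / (2 * l) ^ k := by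
    intro k
    induction k with
    | zero =>
      intro z hz
      rw [pow_zero, one_mul] at hz
      have := hlin z hz
      simp only [pow_zero, div_one]
      nlinarith [mul_le_mul_of_nonneg_left hl.le (mul_nonneg hB (ha.le.trans hz))]
    | succ k ih =>
      intro z hz
      have hlk : 1 ≤ l ^ k := one_le_pow₀ hl.le
      have hP : 0 < (2 * l) ^ k := by positivity
      have hz0 : 0 < z := (mul_pos (pow_pos hl0 _) ha).trans_le hz
      set X := B * z / (2 * l) ^ k
      have hX : 0 ≤ X := div_nonneg (mul_nonneg hB hz0.le) hP.le
      have hlaz : l * a ≤ z := by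
        calc l * a = 1 * (l * a) := (one_mul _).symm
          _ ≤ l ^ k * (l * a) := by gcongr
          _ = l ^ (k + 1) * a := by ring
          _ ≤ z := hz
      have hWz := hrec z (2 * A + l ^ 2 * X) hlaz fun w hw hw' ↦ by
          have hwk : l ^ k * a ≤ w :=
            le_trans ((le_div_iff₀ hl0).2 (by rw [pow_succ] at hz; linarith)) hw
          calc W w ≤ 2 * A + B * l * w / (2 * l) ^ k := ih w hwk
            _ ≤ 2 * A + B * l * (l * z) / (2 * l) ^ k := by gcongr
            _ = 2 * A + l ^ 2 * X := by simp only [X]; ring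
      have hgoal : B * l * z / (2 * l) ^ (k + 1) = X / 2 := by
        simp only [X]; rw [pow_succ]; field_simp
      have hq2 : 2 * q ≤ 1 := by nlinarith
      rw [hgoal]
      nlinarith [mul_le_mul_of_nonneg_right hql hX, mul_le_mul_of_nonneg_right hq2 hA]
  obtain ⟨k, hk, hk'⟩ := exists_nat_pow_near ((one_le_div ha).2 hz) hl
  have hz' : z ≤ l * l ^ k * a := by
    rw [div_lt_iff₀ ha, pow_succ] at hk'; linarith
  have hlk : l ^ k ≤ (2 * l) ^ k := pow_le_pow_left₀ hl0.le (by linarith) k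
  calc W z ≤ 2 * A + B * l * z / (2 * l) ^ k := key k z ((le_div_iff₀ ha).1 hk)
    _ ≤ 2 * A + B * l ^ 2 * a := by
        gcongr
        rw [div_le_iff₀ (by positivity)]
        calc B * l * z ≤ B * l * (l * l ^ k * a) := by gcongr
          _ = B * l ^ 2 * a * l ^ k := by ring
          _ ≤ B * l ^ 2 * a * (2 * l) ^ k := by gcongr

theorem eventually_abs_integral_le {f : ℝ → ℝ} (hloc : LocallyIntegrableOn f (Ioi 0)) {I : ℝ}
    (hI : Tendsto (fun N ↦ ∫ t in (1 : ℝ)..N, f t) atTop (nhds I)) {ε : ℝ} (hε : 0 < ε) :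
    ∀ᶠ a in atTop, ∀ b, a ≤ b → |∫ t in a..b, f t| ≤ ε := by
  obtain ⟨X, hX⟩ := Metric.tendsto_atTop.1 hI (ε / 2) (half_pos hε)
  filter_upwards [eventually_ge_atTop (max X 1)] with a ha b hab
  have h1a : 1 ≤ a := (le_max_right X 1).trans ha
  have hint : ∀ c, a ≤ c → IntervalIntegrable f volume 1 c := fun c hc ↦
    hloc.intervalIntegrable_of_Icc_subset (h1a.trans hc)
      ((Icc_subset_Ioi_iff (h1a.trans hc)).2 one_pos)
  rw [← intervalIntegral.integral_interval_sub_left (hint b hab) (hint a le_rfl), ← Real.dist_eq]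
  linarith [dist_triangle_right (∫ t in (1 : ℝ)..b, f t) (∫ t in (1 : ℝ)..a, f t) I,
    hX b ((le_max_left X 1).trans (ha.trans hab)), hX a ((le_max_left X 1).trans ha)]

theorem tendsto_integral_two_mul {f : ℝ → ℝ} (hloc : LocallyIntegrableOn f (Ioi 0)) {I : ℝ}
    (hI : Tendsto (fun N ↦ ∫ t in (1 : ℝ)..N, f t) atTop (nhds I)) :
    Tendsto (fun z ↦ ∫ t in z..2 * z, f t) atTop (nhds 0) := by
  have h := (hI.comp (tendsto_id.const_mul_atTop two_pos)).sub hI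
  rw [sub_self] at h
  refine h.congr' ?_
  filter_upwards [eventually_ge_atTop 1] with z hz
  simp only [Function.comp_apply, id]
  have hint : ∀ c, 1 ≤ c → IntervalIntegrable f volume 1 c := fun c hc ↦
    hloc.intervalIntegrable_of_Icc_subset hc ((Icc_subset_Ioi_iff hc).2 one_pos)
  exact intervalIntegral.integral_interval_sub_left (hint (2 * z) (by linarith)) (hint z hz)

theorem abs_mul_le_abs_integral_add_dyadicVariation {f : ℝ → ℝ}
    (hloc : LocallyIntegrableOn f (Ioi 0)) (hbv : LocallyBoundedVariationOn f (Ioi 0)) {z : ℝ}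
    (hz : 0 < z) : |z * f z| ≤ |∫ t in z..2 * z, f t| + dyadicVariation f z := by
  have h2z : z ≤ 2 * z := by linarith
  have hIcc : Icc z (2 * z) ⊆ Ioi 0 := (Icc_subset_Ioi_iff h2z).2 hz
  have := abs_mul_le_abs_integral_add_variation h2z
    (hloc.intervalIntegrable_of_Icc_subset h2z hIcc) (hbv.boundedVariationOn_Icc h2z hIcc)
  rwa [show 2 * z - z = z by ring] at this

section GeneralMonotone

variable {f : ℝ → ℝ} {C : ℝ} {ν : ℕ}
  (hloc : LocallyIntegrableOn f (Ioi 0)) (hbv : LocallyBoundedVariationOn f (Ioi 0))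
  (hGM : ∀ x > (0 : ℝ), eVariationOn f (Icc x (2 * x)) ≤
    ENNReal.ofReal (C * ∫ t in Ioo (x / 2 ^ ν) (2 ^ ν * x), |f t| / t))

include hloc hGM in
theorem dyadicVariation_le_of_abs_le (hC : 0 ≤ C) {x₀ β : ℝ} (hx₀ : 0 < x₀)
    (hfb : ∀ t, x₀ ≤ t → |f t| ≤ β) {z : ℝ} (hz : 2 ^ ν * x₀ ≤ z) :
    dyadicVariation f z ≤ C * (2 ^ ν) ^ 2 * β * z := by
  set l : ℝ := 2 ^ ν
  have hl : 1 ≤ l := one_le_pow₀ one_le_two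
  have hz0 : 0 < z := (by positivity : 0 < l * x₀).trans_le hz
  have hzl : x₀ ≤ z / l := (le_div_iff₀ (by positivity)).2 (by linarith)
  have hlz : z / l ≤ l * z := (div_le_self hz0.le hl).trans (le_mul_of_one_le_left hz0.le hl)
  have hIcc : Icc (z / l) (l * z) ⊆ Ioi 0 := (Icc_subset_Ioi_iff hlz).2 (hx₀.trans_le hzl)
  have hint := dyadicVariation_le_integral_abs hC hl hz0
    (hloc.integrableOn_compact_subset hIcc isCompact_Icc) (hGM z hz0)
  have hβ : ∫ t in z / l..l * z, |f t| ≤ (l * z - z / l) * β := by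
    simpa using intervalIntegral.integral_mono_on hlz
      (hloc.intervalIntegrable_of_Icc_subset hlz hIcc).abs intervalIntegrable_const
      fun t ht ↦ hfb t (hzl.trans ht.1)
  have hβ0 : 0 ≤ β := (abs_nonneg _).trans (hfb x₀ le_rfl)
  calc dyadicVariation f z ≤ C * l * ((l * z - z / l) * β) :=
        hint.trans (mul_le_mul_of_nonneg_left hβ (by positivity))
    _ ≤ C * l * (l * z * β) := by gcongr; linarith [div_pos hz0 (by positivity : (0:ℝ) < l)]
    _ = C * l ^ 2 * β * z := by ring

include hloc hbv hGM

theorem exists_dyadicVariation_le (hC : 0 ≤ C) (hν : 1 ≤ ν) (hf0 : Tendsto f atTop (nhds 0))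
    (hcau : ∀ᶠ a in atTop, ∀ b, a ≤ b → |∫ t in a..b, f t| ≤ 1) :
    ∃ R, ∀ᶠ z in atTop, dyadicVariation f z ≤ R := by
  set l : ℝ := 2 ^ ν
  have hl : 1 < l := one_lt_pow₀ one_lt_two (by omega)
  set K := C * l * (2 * ν)
  obtain ⟨x₀, hx₀⟩ := eventually_atTop.1
    ((hf0.eventually (Metric.closedBall_mem_nhds 0 one_pos)).and
      (hcau.and (eventually_gt_atTop 0)))
  have hx₀0 : 0 < x₀ := (hx₀ x₀ le_rfl).2.2
  obtain ⟨n, hn⟩ := exists_nat_gt (2 * K * l ^ 2)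
  have hn0 : (0 : ℝ) < n := lt_of_le_of_lt (by positivity) hn
  refine ⟨2 * (K * n) + C * l ^ 2 * 1 * l ^ 2 * (l * x₀), ?_⟩
  filter_upwards [eventually_ge_atTop (l * x₀)] with z hz
  refine le_of_le_add_mul_window hl (by positivity) (by positivity) (by positivity) (q := K / n)
    ?_ (fun z hz ↦ ?_) (fun z M hz hM ↦ ?_) hz
  · rw [mul_div_assoc', div_mul_eq_mul_div, div_le_one hn0]
    linarith
  · exact dyadicVariation_le_of_abs_le hloc hGM hC hx₀0
      (fun t ht ↦ by simpa using (hx₀ t ht).1) hz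
  · have hz0 : 0 < z := (by positivity : 0 < l * (l * x₀)).trans_le hz
    have hzl : x₀ ≤ z / l := (le_div_iff₀ (by positivity)).2 (by nlinarith)
    have := dyadicVariation_le_of_window_le hloc hbv hC (Nat.cast_pos.1 hn0) hz0 (hGM z hz0)
      (fun a ha b hab ↦ (hx₀ a (hzl.trans ha)).2.1 b hab) hM
    calc dyadicVariation f z ≤ K * (n * 1 + M / n) := this
      _ = K * n + K / n * M := by ring

theorem tendsto_dyadicVariation_zero (hC : 0 ≤ C) {R : ℝ}
    (hR : ∀ᶠ z in atTop, dyadicVariation f z ≤ R)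
    (hcau : ∀ ε > 0, ∀ᶠ a in atTop, ∀ b, a ≤ b → |∫ t in a..b, f t| ≤ ε) :
    Tendsto (dyadicVariation f) atTop (nhds 0) := by
  set l : ℝ := 2 ^ ν
  set K := C * l * (2 * ν)
  refine tendsto_order.2 ⟨fun η hη ↦ ?_, fun η hη ↦ ?_⟩
  · filter_upwards [eventually_ge_atTop 0] with z hz
    exact hη.trans_le (dyadicVariation_nonneg f hz)
  have hR0 : 0 ≤ R := by
    obtain ⟨z, hzR, hz⟩ := (hR.and (eventually_ge_atTop 0)).exists
    exact (dyadicVariation_nonneg f hz).trans hzR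
  obtain ⟨n, hn⟩ := exists_nat_gt (2 * K * R / η)
  have hn0 : (0 : ℝ) < n := lt_of_le_of_lt (by positivity) hn
  set ε := η / (2 * (K * n + 1))
  have hε : 0 < ε := by positivity
  obtain ⟨X, hX⟩ := eventually_atTop.1 (hR.and (hcau ε hε))
  filter_upwards [eventually_ge_atTop (l * X), eventually_gt_atTop 0] with z hzX hz
  have hzl : X ≤ z / l := (le_div_iff₀ (by positivity)).2 (by linarith)
  have hbound := dyadicVariation_le_of_window_le hloc hbv hC (Nat.cast_pos.1 hn0) hz (hGM z hz)
    (fun a ha b hab ↦ (hX a (hzl.trans ha)).2 b hab) fun w hw _ ↦ (hX w (hzl.trans hw)).1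
  have hfirst : K * (n * ε) < η / 2 := by
    rw [show K * (n * ε) = η / 2 * (K * n / (K * n + 1)) by simp only [ε]; field_simp]
    exact mul_lt_of_lt_one_right (half_pos hη) ((div_lt_one (by positivity)).2 (by linarith))
  have hsecond : K * (R / n) < η / 2 := by
    rw [div_lt_iff₀ hη] at hn
    rw [mul_div_assoc', div_lt_iff₀ hn0]
    linarith
  rw [mul_add] at hbound
  linarith

end GeneralMonotone

/-- Abel–Olivier test for general monotone functions: if `f` is general monotone (with
constants `C > 1` and `λ = 2^ν`), locally integrable on `(0,∞)`, and the improper integral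
`∫_1^∞ f(t) dt` converges, then `t·f(t) → 0` as `t → ∞`. -/
theorem abel_olivier_GMFun (f : ℝ → ℝ) (C : ℝ) (hC : 1 < C) (ν : ℕ) (hν : 1 ≤ ν)
    (hloc : LocallyIntegrableOn f (Set.Ioi 0))
    (hGM : GMFun C (2^ν) f)
    (hconv : ∃ I : ℝ, Tendsto (fun N : ℝ => ∫ t in (1:ℝ)..N, f t) atTop (nhds I)) :
    Tendsto (fun t : ℝ => t * f t) atTop (nhds 0) := by
  obtain ⟨hbv, hf0, hGM⟩ := hGM
  obtain ⟨I, hI⟩ := hconv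
  have hcau := fun ε (hε : 0 < ε) ↦ eventually_abs_integral_le hloc hI hε
  obtain ⟨R, hR⟩ := exists_dyadicVariation_le hloc hbv hGM (by linarith) hν hf0 (hcau 1 one_pos)
  have hW := tendsto_dyadicVariation_zero hloc hbv hGM (by linarith) hR hcau
  have hbound := (tendsto_integral_two_mul hloc hI).abs.add hW
  rw [abs_zero, zero_add] at hbound
  refine squeeze_zero_norm' ?_ hbound
  filter_upwards [eventually_gt_atTop 0] with z hz
  exact abs_mul_le_abs_integral_add_dyadicVariation hloc hbv hz
end

section
/- Let (a_n)_{n≥0} be a real-valued general monotone sequence with constants C > 1 and λ > 1. If the series ∑_{n=0}^∞ a_n converges, then n·a_n → 0 as n → ∞. -/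
open Filter

/-- `(a_n)` is a general monotone sequence with constants `C` and `l`: it vanishes at infinity
and for every `n ≥ 1`, `∑_{k=n}^{2n} |a_k − a_{k+1}| ≤ C·∑_{n/l ≤ k ≤ ln} |a_k|/k`. -/
def GMSeq (C l : ℝ) (a : ℕ → ℝ) : Prop :=
  Filter.Tendsto a Filter.atTop (nhds 0) ∧
  ∀ n : ℕ, 1 ≤ n → ∑ k ∈ Finset.Icc n (2*n), |a k - a (k+1)| ≤
    C * ∑ k ∈ Finset.Icc ⌈(n:ℝ)/l⌉₊ ⌊l*(n:ℝ)⌋₊, |a k| / (k:ℝ)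

/-!
Write `n a_n = ∑_{n<k≤2n} a_k + ∑_{n<k≤2n} (a_n - a_k)`. The first sum is a Cauchy tail, the
second is at most `n ∑_{k=n}^{2n} |a_k - a_{k+1}| ≤ C λ G(n)` with `G(n) = ∑_{n/λ ≤ k ≤ λn} |a_k|`,
so everything reduces to `G(n) → 0`.

Cut the window `[n/λ, λn]` into blocks of length `m ≈ c n`. On a block every `a_k` lies within
the variation of the block from the mean, so `G(n) ≤ (λ/c + 1) ε + m · Var`, where `ε` bounds
the Cauchy tails. The variation over the window is covered by `O(log λ)` dyadic blocks
`[2^i p, 2^{i+1} p]`, each controlled by the GM condition through `G(2^i p) / 2^i p`. Hence an a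
priori bound `G(k) ≤ K + η k` improves to `G(k) ≤ K + η k / 2` for a fixed small `c`, so `G` is
bounded (start from the trivial `η = λ sup |a|`); with `G ≤ K` and `c`, then `ε`, small,
`G(n) → 0`.
-/

open Finset Topology

theorem sum_abs_le_abs_sum_add_card_mul {ι : Type*} (s : Finset ι) (f : ι → ℝ) {V : ℝ}
    (h : ∀ i ∈ s, ∀ j ∈ s, |f i - f j| ≤ V) :
    ∑ i ∈ s, |f i| ≤ |∑ i ∈ s, f i| + #s * V := by
  rcases s.eq_empty_or_nonempty with rfl | hs
  · simp
  -- every value lies within `V` of the mean `μ`, which is squeezed between two of the values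
  set μ := (∑ i ∈ s, f i) / #s
  have hcard : (#s : ℝ) ≠ 0 := by exact_mod_cast hs.card_pos.ne'
  have hsum : ∑ _i ∈ s, μ = ∑ i ∈ s, f i := by
    rw [sum_const, nsmul_eq_mul, mul_div_cancel₀ _ hcard]
  obtain ⟨i, hi, hfi⟩ := exists_le_of_sum_le hs hsum.ge
  obtain ⟨j, hj, hfj⟩ := exists_le_of_sum_le hs hsum.le
  have hclose : ∀ k ∈ s, |f k| ≤ |μ| + V := fun k hk => by
    have := abs_le.mp (h k hk i hi)
    have := abs_le.mp (h j hj k hk)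
    have : |f k - μ| ≤ V := abs_le.mpr ⟨by linarith, by linarith⟩
    calc |f k| = |μ + (f k - μ)| := by ring_nf
      _ ≤ |μ| + V := (abs_add_le _ _).trans (by linarith)
  calc ∑ i ∈ s, |f i| ≤ #s • (|μ| + V) := sum_le_card_nsmul _ _ _ hclose
    _ = |∑ i ∈ s, f i| + #s * V := by
      rw [nsmul_eq_mul, mul_add, ← hsum, sum_const, nsmul_eq_mul, abs_mul, Nat.abs_cast]

/-- The variation of `a` on the closed interval `[p, q]`. -/
def variation (a : ℕ → ℝ) (p q : ℕ) : ℝ := ∑ k ∈ Ico p q, |a k - a (k + 1)|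

section variation

variable (a : ℕ → ℝ)

theorem variation_nonneg (p q : ℕ) : 0 ≤ variation a p q :=
  sum_nonneg fun _ _ => abs_nonneg _

theorem variation_mono {p p' q q' : ℕ} (hp : p' ≤ p) (hq : q ≤ q') :
    variation a p q ≤ variation a p' q' :=
  sum_le_sum_of_subset_of_nonneg (Ico_subset_Ico hp hq) fun _ _ _ => abs_nonneg _

theorem variation_add {p q r : ℕ} (hpq : p ≤ q) (hqr : q ≤ r) :
    variation a p q + variation a q r = variation a p r :=
  sum_Ico_consecutive _ hpq hqr

theorem abs_sub_le_variation {p q i j : ℕ} (hi : i ∈ Ico p q) (hj : j ∈ Ico p q) :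
    |a i - a j| ≤ variation a p q := by
  wlog hij : i ≤ j generalizing i j
  · rw [abs_sub_comm]; exact this hj hi (by omega)
  simp only [mem_Ico] at hi hj
  rw [abs_sub_comm, ← sum_Ico_sub (f := a) hij]
  calc |∑ k ∈ Ico i j, (a (k + 1) - a k)| ≤ ∑ k ∈ Ico i j, |a k - a (k + 1)| := by
        simpa only [abs_sub_comm] using abs_sum_le_sum_abs (fun k => a (k + 1) - a k) (Ico i j)
    _ ≤ variation a p q :=
        sum_le_sum_of_subset_of_nonneg (Ico_subset_Ico hi.1 (by omega)) fun _ _ _ => abs_nonneg _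

theorem variation_two_pow_mul_eq_sum (p L : ℕ) :
    variation a p (2 ^ L * p) = ∑ i ∈ range L, variation a (2 ^ i * p) (2 ^ (i + 1) * p) := by
  induction L with
  | zero => simp [variation]
  | succ L ih =>
    rw [sum_range_succ, ← ih, variation_add]
    · exact Nat.le_mul_of_pos_left p (Nat.two_pow_pos L)
    · exact Nat.mul_le_mul_right p (Nat.pow_le_pow_right two_pos L.le_succ)

end variation

theorem sum_abs_Ico_le_of_abs_sum_le {a : ℕ → ℝ} {ε : ℝ} {m : ℕ} (hm : 0 < m) (d : ℕ) {p : ℕ}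
    (hS : ∀ i j, p ≤ i → |∑ k ∈ Ico i j, a k| ≤ ε) :
    ∑ k ∈ Ico p (p + d), |a k| ≤ (d / m + 1) * ε + m * variation a p (p + d) := by
  induction d using Nat.strong_induction_on generalizing p with
  | _ d ih =>
  have hε : 0 ≤ ε := (abs_nonneg _).trans (hS p p le_rfl)
  have hblock : ∀ e ≤ m, ∑ k ∈ Ico p (p + e), |a k| ≤ ε + m * variation a p (p + e) := by
    intro e he
    refine (sum_abs_le_abs_sum_add_card_mul _ _
      fun i hi j hj => abs_sub_le_variation a hi hj).trans ?_
    rw [Nat.card_Ico, Nat.add_sub_cancel_left]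
    gcongr
    · exact hS p _ le_rfl
    · exact variation_nonneg a _ _
  rcases lt_or_ge d m with hdm | hmd
  · calc _ ≤ ε + m * variation a p (p + d) := hblock d hdm.le
      _ ≤ (d / m + 1) * ε + m * variation a p (p + d) := by
        have : (0 : ℝ) ≤ d / m * ε := by positivity
        linarith
  · obtain ⟨e, rfl⟩ := Nat.exists_eq_add_of_le hmd
    have hrest := ih e (by omega) (p := p + m) fun i j hi => hS i j (by omega)
    have hm' : (m : ℝ) ≠ 0 := by exact_mod_cast hm.ne'
    rw [← add_assoc, ← sum_Ico_consecutive _ (by omega : p ≤ p + m) (by omega),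
      ← variation_add a (by omega : p ≤ p + m) (by omega)]
    calc _ ≤ (ε + m * variation a p (p + m))
          + ((e / m + 1) * ε + m * variation a (p + m) (p + m + e)) :=
          add_le_add (hblock m le_rfl) hrest
      _ = _ := by push_cast; field_simp; ring

theorem exists_abs_sum_Ico_le {a : ℕ → ℝ} (h : CauchySeq fun N => ∑ n ∈ range N, a n)
    {ε : ℝ} (hε : 0 < ε) : ∃ N, ∀ i j, N ≤ i → |∑ k ∈ Ico i j, a k| ≤ ε := by
  obtain ⟨N, hN⟩ := Metric.cauchySeq_iff.mp h ε hε
  refine ⟨N, fun i j hi => ?_⟩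
  rcases le_total i j with hij | hji
  · rw [sum_Ico_eq_sub _ hij, ← Real.dist_eq]
    exact (hN j (hi.trans hij) i hi).le
  · simpa [Ico_eq_empty_of_le hji] using hε.le

theorem natCast_mul_abs_le_abs_sum_add (a : ℕ → ℝ) (n : ℕ) :
    |n * a n| ≤ |∑ k ∈ Ico (n + 1) (2 * n + 1), a k| + n * variation a n (2 * n + 1) := by
  have hcard : #(Ico (n + 1) (2 * n + 1)) = n := by simp only [Nat.card_Ico]; omega
  have hsplit : n * a n = ∑ k ∈ Ico (n + 1) (2 * n + 1), a k
      + ∑ k ∈ Ico (n + 1) (2 * n + 1), (a n - a k) := by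
    rw [sum_sub_distrib, sum_const, hcard, nsmul_eq_mul]; ring
  have hdiff : ∀ k ∈ Ico (n + 1) (2 * n + 1), |a n - a k| ≤ variation a n (2 * n + 1) :=
    fun k hk => abs_sub_le_variation a (by simp; omega) (by simp at hk ⊢; omega)
  calc |n * a n| ≤ |∑ k ∈ Ico (n + 1) (2 * n + 1), a k|
        + ∑ k ∈ Ico (n + 1) (2 * n + 1), |a n - a k| :=
        hsplit ▸ (abs_add_le _ _).trans (add_le_add_right (abs_sum_le_sum_abs _ _) _)
    _ ≤ _ := by
      grw [sum_le_card_nsmul _ _ _ hdiff, hcard, nsmul_eq_mul]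

noncomputable def windowAbsSum (a : ℕ → ℝ) (l : ℝ) (n : ℕ) : ℝ :=
  ∑ k ∈ Icc ⌈(n : ℝ) / l⌉₊ ⌊l * (n : ℝ)⌋₊, |a k|

theorem windowAbsSum_nonneg (a : ℕ → ℝ) (l : ℝ) (n : ℕ) : 0 ≤ windowAbsSum a l n :=
  sum_nonneg fun _ _ => abs_nonneg _

theorem windowAbsSum_le_of_abs_le {a : ℕ → ℝ} {l B : ℝ} (hl : 0 ≤ l) (hB : ∀ k, |a k| ≤ B)
    (n : ℕ) : windowAbsSum a l n ≤ (l * n + 1) * B := by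
  have hB0 : 0 ≤ B := (abs_nonneg _).trans (hB 0)
  have hcard : (#(Icc ⌈(n : ℝ) / l⌉₊ ⌊l * (n : ℝ)⌋₊) : ℝ) ≤ l * n + 1 := by
    have : ((⌊l * (n : ℝ)⌋₊ : ℕ) : ℝ) ≤ l * n := Nat.floor_le (by positivity)
    have : #(Icc ⌈(n : ℝ) / l⌉₊ ⌊l * (n : ℝ)⌋₊) ≤ ⌊l * (n : ℝ)⌋₊ + 1 := by
      simp only [Nat.card_Icc]; omega
    calc _ ≤ ((⌊l * (n : ℝ)⌋₊ + 1 : ℕ) : ℝ) := by exact_mod_cast this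
      _ ≤ _ := by push_cast; linarith
  calc windowAbsSum a l n ≤ _ • B := sum_le_card_nsmul _ _ _ fun k _ => hB k
    _ ≤ (l * n + 1) * B := by rw [nsmul_eq_mul]; gcongr

theorem windowAbsSum_le_of_abs_sum_le {a : ℕ → ℝ} {l ε : ℝ} (hl : 1 ≤ l) {N : ℕ}
    (hS : ∀ i j, N ≤ i → |∑ k ∈ Ico i j, a k| ≤ ε) {L : ℕ} (hL : l * l + 1 ≤ 2 ^ L)
    {n m : ℕ} (hn : 0 < n) (hm : 0 < m) (hNn : N * l ≤ n) :
    windowAbsSum a l n ≤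
      (l * n / m + 1) * ε + m * variation a ⌈(n : ℝ) / l⌉₊ (2 ^ L * ⌈(n : ℝ) / l⌉₊) := by
  have hl0 : 0 < l := one_pos.trans_le hl
  have hn0 : (0 : ℝ) < n := by exact_mod_cast hn
  set p := ⌈(n : ℝ) / l⌉₊
  set r := ⌊l * (n : ℝ)⌋₊
  have hp : (n : ℝ) / l ≤ p := Nat.le_ceil _
  have hp1 : (1 : ℝ) ≤ p := by exact_mod_cast Nat.ceil_pos.mpr (div_pos hn0 hl0)
  have hr : (r : ℝ) ≤ l * n := Nat.floor_le (by positivity)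
  have hpr : p ≤ r :=
    (Nat.ceil_le.mpr (div_le_self hn0.le hl)).trans (Nat.le_floor (by nlinarith))
  have hNp : N ≤ p := by exact_mod_cast ((le_div_iff₀ hl0).mpr hNn).trans hp
  have hblocks := sum_abs_Ico_le_of_abs_sum_le (a := a) hm (r + 1 - p)
    fun i j hi => hS i j (hNp.trans hi)
  rw [Nat.add_sub_cancel' (by omega), Ico_add_one_right_eq_Icc] at hblocks
  have hlen : ((r + 1 - p : ℕ) : ℝ) ≤ l * n := by
    have : 1 ≤ p := by exact_mod_cast hp1
    exact (Nat.cast_le.mpr (by omega : r + 1 - p ≤ r)).trans hr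
  have hend : r + 1 ≤ 2 ^ L * p := by
    have hnp : n ≤ l * p := by rwa [div_le_iff₀' hl0] at hp
    have : ((r + 1 : ℕ) : ℝ) ≤ ((2 ^ L * p : ℕ) : ℝ) := by
      push_cast
      nlinarith [mul_le_mul_of_nonneg_left hnp hl0.le,
        mul_le_mul_of_nonneg_right hL (zero_le_one.trans hp1)]
    exact_mod_cast this
  calc windowAbsSum a l n
      ≤ (((r + 1 - p : ℕ) : ℝ) / m + 1) * ε + m * variation a p (r + 1) := hblocks
    _ ≤ _ := by
      have hε : 0 ≤ ε := (abs_nonneg _).trans (hS N N le_rfl)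
      gcongr
      exact variation_mono a le_rfl hend

theorem le_of_forall_le_add_mul_of_halving {α : Type*} {f g : α → ℝ} {K η₀ : ℝ} (hη₀ : 0 ≤ η₀)
    (h₀ : ∀ x, f x ≤ K + η₀ * g x)
    (hhalf : ∀ η, 0 ≤ η → (∀ x, f x ≤ K + η * g x) → ∀ x, f x ≤ K + η / 2 * g x) (x : α) :
    f x ≤ K := by
  have hj : ∀ j : ℕ, ∀ x, f x ≤ K + η₀ * (1 / 2) ^ j * g x := by
    intro j
    induction j with
    | zero => simpa using h₀
    | succ j ih =>
      convert hhalf _ (by positivity) ih using 4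
      ring
  have hlim : Tendsto (fun j : ℕ => K + η₀ * (1 / 2) ^ j * g x) atTop (𝓝 K) := by
    have := ((tendsto_pow_atTop_nhds_zero_of_lt_one (r := (1 / 2 : ℝ)) (by norm_num)
      (by norm_num)).const_mul η₀).mul_const (g x)
    simpa using tendsto_const_nhds.add this
  exact ge_of_tendsto' hlim fun j => hj j x

theorem eventually_one_le_mul_and_le {c : ℝ} (hc : 0 < c) (x : ℝ) :
    ∀ᶠ n : ℕ in atTop, 1 ≤ c * n ∧ x ≤ n := by
  filter_upwards [tendsto_natCast_atTop_atTop.eventually_ge_atTop (1 / c),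
    tendsto_natCast_atTop_atTop.eventually_ge_atTop x] with n hcn hxn
  exact ⟨by rwa [div_le_iff₀' hc] at hcn, hxn⟩

namespace GMSeq

variable {C l : ℝ} {a : ℕ → ℝ}

theorem natCast_mul_variation_le (hGM : GMSeq C l a) (hC : 0 ≤ C) (hl : 0 < l) (n : ℕ) :
    n * variation a n (2 * n + 1) ≤ C * l * windowAbsSum a l n := by
  rcases Nat.eq_zero_or_pos n with rfl | hn
  · simpa using mul_nonneg (mul_nonneg hC hl.le) (windowAbsSum_nonneg a l 0)
  have hterm : ∀ k ∈ Icc ⌈(n : ℝ) / l⌉₊ ⌊l * (n : ℝ)⌋₊, n * (|a k| / k) ≤ l * |a k| := by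
    intro k hk
    have hk : (n : ℝ) / l ≤ k := Nat.ceil_le.mp (mem_Icc.mp hk).1
    have hk0 : (0 : ℝ) < k := lt_of_lt_of_le (by positivity) hk
    have hnk : (n : ℝ) ≤ l * k := by rwa [div_le_iff₀ hl, mul_comm] at hk
    rw [mul_div_assoc', div_le_iff₀ hk0]
    nlinarith [abs_nonneg (a k)]
  calc n * variation a n (2 * n + 1)
      ≤ n * (C * ∑ k ∈ Icc ⌈(n : ℝ) / l⌉₊ ⌊l * (n : ℝ)⌋₊, |a k| / k) := by
        rw [variation, Ico_add_one_right_eq_Icc]; gcongr; exact hGM.2 n hn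
    _ = C * ∑ k ∈ Icc ⌈(n : ℝ) / l⌉₊ ⌊l * (n : ℝ)⌋₊, n * (|a k| / k) := by
        rw [mul_sum, mul_sum, mul_sum]; exact sum_congr rfl fun _ _ => by ring
    _ ≤ C * ∑ k ∈ Icc ⌈(n : ℝ) / l⌉₊ ⌊l * (n : ℝ)⌋₊, l * |a k| :=
        mul_le_mul_of_nonneg_left (sum_le_sum hterm) hC
    _ = C * l * windowAbsSum a l n := by rw [windowAbsSum, ← mul_sum, mul_assoc]

theorem variation_le_of_windowAbsSum_le (hGM : GMSeq C l a) (hC : 0 ≤ C) (hl : 0 < l)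
    {K η : ℝ} (hK : 0 ≤ K) (hG : ∀ k, windowAbsSum a l k ≤ K + η * k) {p : ℕ} (hp : 0 < p)
    (L : ℕ) : variation a p (2 ^ L * p) ≤ 2 * C * l * K / p + L * C * l * η := by
  have hblock : ∀ i, variation a (2 ^ i * p) (2 ^ (i + 1) * p)
      ≤ C * l * K / p * (1 / 2) ^ i + C * l * η := by
    intro i
    set x := 2 ^ i * p
    have hx : (0 : ℝ) < x := by positivity
    have hxV := (hGM.natCast_mul_variation_le hC hl x).trans
      (mul_le_mul_of_nonneg_left (hG x) (by positivity))
    calc variation a x (2 ^ (i + 1) * p) ≤ variation a x (2 * x + 1) :=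
          variation_mono a le_rfl (by rw [pow_succ', mul_assoc]; omega)
      _ ≤ C * l * (K + η * x) / x := by rw [le_div_iff₀ hx, mul_comm]; exact hxV
      _ = C * l * K / p * (1 / 2) ^ i + C * l * η := by
        simp only [x]; push_cast; rw [one_div_pow]; field_simp
  have hgeom : C * l * K / p * ∑ i ∈ range L, (1 / 2 : ℝ) ^ i ≤ C * l * K / p * 2 :=
    mul_le_mul_of_nonneg_left (sum_geometric_two_le L) (by positivity)
  calc variation a p (2 ^ L * p) ≤ ∑ i ∈ range L, (C * l * K / p * (1 / 2) ^ i + C * l * η) := by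
        rw [variation_two_pow_mul_eq_sum]; exact sum_le_sum fun i _ => hblock i
    _ ≤ 2 * C * l * K / p + L * C * l * η := by
        rw [sum_add_distrib, ← mul_sum, sum_const, card_range, nsmul_eq_mul]
        linear_combination hgeom

theorem windowAbsSum_le (hGM : GMSeq C l a) (hC : 0 ≤ C) (hl : 1 < l) {L : ℕ}
    (hL : l * l + 1 ≤ 2 ^ L) {ε : ℝ} {N : ℕ} (hS : ∀ i j, N ≤ i → |∑ k ∈ Ico i j, a k| ≤ ε)
    {K η : ℝ} (hK : 0 ≤ K) (hη : 0 ≤ η) (hG : ∀ k, windowAbsSum a l k ≤ K + η * k)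
    {c : ℝ} (hc : 0 < c) {n : ℕ} (hcn : 1 ≤ c * n) (hNn : N * l ≤ n) :
    windowAbsSum a l n ≤ (l / c + 1) * ε + c * (4 * C * l ^ 2 * L) * (K + η * n) := by
  have hl0 : 0 < l := one_pos.trans hl
  have hε : 0 ≤ ε := (abs_nonneg _).trans (hS N N le_rfl)
  have hn : 0 < n := Nat.pos_of_ne_zero fun h => by simp [h] at hcn; linarith
  have hL1 : (1 : ℝ) ≤ L := by
    rcases Nat.eq_zero_or_pos L with rfl | hL1
    · nlinarith
    · exact_mod_cast hL1
  set p := ⌈(n : ℝ) / l⌉₊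
  set m := ⌈c * n⌉₊
  have hp1 : 1 ≤ p := Nat.ceil_pos.mpr (by positivity)
  have hnp : (n : ℝ) / p ≤ l := by
    rw [div_le_iff₀ (by exact_mod_cast hp1), mul_comm, ← div_le_iff₀ hl0]; exact Nat.le_ceil _
  have hm : c * n ≤ m := Nat.le_ceil _
  have hm' : (m : ℝ) ≤ 2 * c * n := by
    linarith [(Nat.ceil_lt_add_one (by positivity) : (m : ℝ) < c * n + 1)]
  have hwin := windowAbsSum_le_of_abs_sum_le (m := m) hl.le hS hL hn
    (Nat.ceil_pos.mpr (by linarith)) hNn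
  have hvar := hGM.variation_le_of_windowAbsSum_le hC hl0 hK hG hp1 L
  have hcount : l * n / m ≤ l / c := by
    rw [div_le_div_iff₀ (by linarith) hc]; nlinarith
  calc windowAbsSum a l n ≤ (l / c + 1) * ε + m * (2 * C * l * K / p + L * C * l * η) := by
        refine hwin.trans ?_; gcongr
    _ ≤ (l / c + 1) * ε + 2 * c * n * (2 * C * l * K / p + L * C * l * η) := by gcongr
    _ = (l / c + 1) * ε + 4 * c * C * l * K * (n / p) + 2 * c * L * C * l * η * n := by
        field_simp; ring
    _ ≤ (l / c + 1) * ε + 4 * c * C * l * K * l + 2 * c * L * C * l * η * n := by gcongr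
    _ ≤ (l / c + 1) * ε + c * (4 * C * l ^ 2 * L) * (K + η * n) := by
        have h1 : 0 ≤ 4 * c * C * l ^ 2 * K * (L - 1) := by
          have : (0 : ℝ) ≤ L - 1 := by linarith
          positivity
        have h2 : 0 ≤ 2 * c * L * C * l * η * n * (2 * l - 1) := by
          have : (0 : ℝ) ≤ 2 * l - 1 := by linarith
          positivity
        linarith

theorem exists_windowAbsSum_le (hGM : GMSeq C l a) (hC : 0 ≤ C) (hl : 1 < l)
    (hconv : CauchySeq fun N => ∑ n ∈ range N, a n) : ∃ K, ∀ n, windowAbsSum a l n ≤ K := by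
  obtain ⟨L, hL⟩ : ∃ L : ℕ, l * l + 1 ≤ 2 ^ L :=
    (pow_unbounded_of_one_lt _ one_lt_two).imp fun _ => le_of_lt
  obtain ⟨N, hN⟩ := exists_abs_sum_Ico_le hconv one_pos
  obtain ⟨B, hB⟩ := hGM.1.abs.bddAbove_range
  replace hB : ∀ k, |a k| ≤ B := fun k => hB ⟨k, rfl⟩
  have hB0 : 0 ≤ B := (abs_nonneg _).trans (hB 0)
  have hl0 : 0 < l := one_pos.trans hl
  set D := 4 * C * l ^ 2 * L
  set c := 1 / (2 * D + 1)
  have hc : 0 < c := by positivity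
  have hcD : c * D ≤ 1 / 2 := by
    rw [div_mul_eq_mul_div, one_mul, div_le_div_iff₀ (by positivity) two_pos]; linarith
  obtain ⟨n₀, hn₀⟩ := eventually_atTop.mp (eventually_one_le_mul_and_le hc (N * l))
  set K := max (2 * (l / c + 1)) ((l * n₀ + 1) * B)
  have hK : 0 ≤ K := le_max_of_le_left (by positivity)
  have hsmall : ∀ n ≤ n₀, windowAbsSum a l n ≤ K := fun n hn =>
    (windowAbsSum_le_of_abs_le hl0.le hB n).trans (le_max_of_le_right (by gcongr))
  refine ⟨K, le_of_forall_le_add_mul_of_halving (g := fun n : ℕ => (n : ℝ)) (η₀ := l * B)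
    (by positivity) (fun n => ?_) (fun η hη hG n => ?_)⟩
  · have : B ≤ K := le_max_of_le_right (by nlinarith [mul_nonneg hl0.le (n₀.cast_nonneg (α := ℝ))])
    linarith [windowAbsSum_le_of_abs_le hl0.le hB n]
  · rcases le_total n n₀ with hn | hn
    · nlinarith [hsmall n hn, n.cast_nonneg (α := ℝ)]
    obtain ⟨hcn, hNn⟩ := hn₀ n hn
    have := hGM.windowAbsSum_le hC hl hL hN hK hη hG hc hcn hNn
    have : c * D * (K + η * n) ≤ 1 / 2 * (K + η * n) := by gcongr
    have : 2 * (l / c + 1) ≤ K := le_max_left _ _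
    linarith

theorem tendsto_windowAbsSum (hGM : GMSeq C l a) (hC : 0 ≤ C) (hl : 1 < l)
    (hconv : CauchySeq fun N => ∑ n ∈ range N, a n) :
    Tendsto (windowAbsSum a l) atTop (𝓝 0) := by
  obtain ⟨K, hK⟩ := hGM.exists_windowAbsSum_le hC hl hconv
  have hK0 : 0 ≤ K := (windowAbsSum_nonneg a l 0).trans (hK 0)
  obtain ⟨L, hL⟩ : ∃ L : ℕ, l * l + 1 ≤ 2 ^ L :=
    (pow_unbounded_of_one_lt _ one_lt_two).imp fun _ => le_of_lt
  rw [Metric.tendsto_nhds]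
  intro δ hδ
  set D := 4 * C * l ^ 2 * L
  set c := δ / (4 * (D * K + 1))
  have hc : 0 < c := by positivity
  have hcDK : c * D * K ≤ δ / 4 := by
    rw [mul_assoc, div_mul_eq_mul_div, div_le_div_iff₀ (by positivity) (by norm_num)]
    nlinarith
  set ε := δ / (4 * (l / c + 1))
  have hε : (l / c + 1) * ε = δ / 4 := by
    simp only [ε]; field_simp
  obtain ⟨N, hN⟩ := exists_abs_sum_Ico_le hconv (by positivity : 0 < ε)
  filter_upwards [eventually_one_le_mul_and_le hc (N * l)] with n ⟨hcn, hNn⟩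
  have := hGM.windowAbsSum_le hC hl hL hN hK0 le_rfl (fun k => by simpa using hK k) hc hcn hNn
  rw [Real.dist_eq, sub_zero, abs_of_nonneg (windowAbsSum_nonneg a l n)]
  simp only [zero_mul, add_zero] at this
  linarith

end GMSeq

/-- Abel–Olivier test for general monotone sequences: if `(a_n)` is a real-valued general
monotone sequence with constants `C > 1`, `λ > 1`, and `∑ a_n` converges, then `n·a_n → 0`. -/
theorem abel_olivier_GMSeq (a : ℕ → ℝ) (C l : ℝ) (hC : 1 < C) (hl : 1 < l)
    (hGM : GMSeq C l a)
    (hconv : ∃ S : ℝ, Tendsto (fun N : ℕ => ∑ n ∈ Finset.range N, a n) atTop (nhds S)) :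
    Tendsto (fun n : ℕ => (n : ℝ) * a n) atTop (nhds 0) := by
  obtain ⟨S, hS⟩ := hconv
  have hC0 : 0 ≤ C := zero_le_one.trans hC.le
  have htail : Tendsto (fun n => ∑ k ∈ Ico (n + 1) (2 * n + 1), a k) atTop (𝓝 0) := by
    have hlim (f : ℕ → ℕ) (hf : ∀ n, n ≤ f n) :=
      hS.comp (tendsto_atTop_mono hf tendsto_id)
    have := (hlim (2 * · + 1) (by omega)).sub (hlim (· + 1) (by omega))
    rw [sub_self] at this
    exact this.congr fun n => (sum_Ico_eq_sub _ (by omega)).symm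
  refine squeeze_zero_norm (fun n => (natCast_mul_abs_le_abs_sum_add a n).trans
    (add_le_add_right (hGM.natCast_mul_variation_le hC0 (one_pos.trans hl) n) _)) ?_
  simpa using htail.abs.add ((hGM.tendsto_windowAbsSum hC0 hl hS.cauchySeq).const_mul (C * l))
end

section
/- Let f : (0,∞) → ℝ be general monotone with constants C > 1 and λ = 2^ν. Then there exists a constant K > 0, depending only on C and λ, such that for every t > 0 one has |f(t)| ≤ K·∫_{t/λ}^{λt} |f(s)|/s ds. -/
open MeasureTheory Filter Set

/-- A function of locally bounded variation on `(0,∞)` is integrable (after dividing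
by `s`, in absolute value) on any `Ioo a b` with `0 < a`. -/
lemma GM_aux_integrableOn {f : ℝ → ℝ} (h : LocallyBoundedVariationOn f (Set.Ioi 0))
    {a b : ℝ} (ha : 0 < a) :
    IntegrableOn (fun u => |f u| / u) (Set.Ioo a b) := by
  obtain ⟨p, q, hp, hq, hfpq⟩ := h.exists_monotoneOn_sub_monotoneOn
  have hsub : Set.Icc a b ⊆ Set.Ioi 0 := fun x hx => lt_of_lt_of_le ha hx.1
  have hfint : IntegrableOn f (Set.Icc a b) := by
    rw [hfpq]
    exact ((hp.mono hsub).integrableOn_isCompact isCompact_Icc).sub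
      ((hq.mono hsub).integrableOn_isCompact isCompact_Icc)
  have hmeas : AEStronglyMeasurable (fun u => |f u| / u)
      ((volume : Measure ℝ).restrict (Set.Icc a b)) := by
    exact (hfint.abs.aemeasurable.div aemeasurable_id).aestronglyMeasurable
  have hbound : IntegrableOn (fun u => |f u| / a) (Set.Icc a b) :=
    hfint.abs.div_const a
  have : IntegrableOn (fun u => |f u| / u) (Set.Icc a b) := by
    refine Integrable.mono' hbound hmeas ?_
    refine (ae_restrict_iff' measurableSet_Icc).mpr (ae_of_all _ fun u hu => ?_)
    have hu0 : 0 < u := lt_of_lt_of_le ha hu.1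
    have : ‖|f u| / u‖ = |f u| / u := by
      rw [Real.norm_eq_abs, abs_div, abs_abs, abs_of_pos hu0]
    rw [this]
    exact div_le_div_of_nonneg_left (abs_nonneg _) ha hu.1
  exact this.mono_set Set.Ioo_subset_Icc_self

/-- Pointwise estimate for general monotone functions: if `f` is general monotone with
constants `C > 1` and `λ = 2^ν`, then there is `K > 0` depending only on `C` and `λ` such
that `|f(t)| ≤ K·∫_{t/λ}^{λt} |f(s)|/s ds` for every `t > 0`. -/
theorem GMFun_pointwise_estimate (C : ℝ) (hC : 1 < C) (ν : ℕ) (hν : 1 ≤ ν) :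
    ∃ K : ℝ, 0 < K ∧ ∀ f : ℝ → ℝ, GMFun C (2^ν) f →
      ∀ t > (0:ℝ), |f t| ≤ K * ∫ s in Set.Ioo (t/(2^ν)) ((2^ν)*t), |f s| / s := by
  have hlog : 0 < Real.log 2 := Real.log_pos one_lt_two
  refine ⟨C + 1 / Real.log 2, by positivity, fun f hf t ht => ?_⟩
  set l : ℝ := (2:ℝ)^ν with hl
  have hl2 : (2:ℝ) ≤ l := by
    calc (2:ℝ) = 2^1 := (pow_one 2).symm
    _ ≤ 2^ν := pow_le_pow_right₀ one_le_two hν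
  have hl1 : (1:ℝ) < l := lt_of_lt_of_le one_lt_two hl2
  have ha : 0 < t / l := div_pos ht (lt_trans one_pos hl1)
  set I : ℝ := ∫ s in Set.Ioo (t/l) (l*t), |f s| / s with hI
  have hI0 : 0 ≤ I :=
    setIntegral_nonneg measurableSet_Ioo
      (fun s hs => div_nonneg (abs_nonneg _) (le_of_lt (lt_trans ha hs.1)))
  have hCI : 0 ≤ C * I := mul_nonneg (le_of_lt (lt_trans one_pos hC)) hI0
  -- variation bound
  have hvar : ∀ u ∈ Set.Icc t (2*t), |f t - f u| ≤ C * I := by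
    intro u hu
    have ht2 : t ∈ Set.Icc t (2*t) := ⟨le_refl t, by linarith⟩
    have h2 : edist (f t) (f u) ≤ eVariationOn f (Set.Icc t (2*t)) :=
      eVariationOn.edist_le f ht2 hu
    have h3 := le_trans h2 (hf.2.2 t ht)
    rw [edist_dist] at h3
    have h4 : dist (f t) (f u) ≤ C * I := (ENNReal.ofReal_le_ofReal_iff hCI).mp h3
    rwa [Real.dist_eq] at h4
  by_cases hm : |f t| ≤ C * I
  · calc |f t| ≤ C * I := hm
      _ ≤ (C + 1 / Real.log 2) * I := by
        nlinarith [mul_nonneg (le_of_lt (one_div_pos.mpr hlog)) hI0]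
  · push_neg at hm
    set m : ℝ := |f t| - C * I with hmdef
    have hm0 : 0 < m := by simp only [hmdef]; linarith
    have hsubset : Set.Ioo t (2*t) ⊆ Set.Ioo (t/l) (l*t) := by
      intro u hu
      exact ⟨lt_trans (div_lt_self ht hl1) hu.1,
        lt_of_lt_of_le hu.2 (mul_le_mul_of_nonneg_right hl2 ht.le)⟩
    have hint_big : IntegrableOn (fun u => |f u| / u) (Set.Ioo (t/l) (l*t)) :=
      GM_aux_integrableOn hf.1 ha
    have hint_small : IntegrableOn (fun u => |f u| / u) (Set.Ioo t (2*t)) :=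
      hint_big.mono_set hsubset
    have hint_m : IntegrableOn (fun u => m / u) (Set.Ioo t (2*t)) := by
      have hcont : ContinuousOn (fun u => m / u) (Set.Icc t (2*t)) :=
        continuousOn_const.div continuousOn_id
          (fun x hx => ne_of_gt (lt_of_lt_of_le ht hx.1))
      exact (hcont.integrableOn_Icc).mono_set Set.Ioo_subset_Icc_self
    have step1 : (∫ u in Set.Ioo t (2*t), m / u) ≤ ∫ u in Set.Ioo t (2*t), |f u| / u := by
      refine setIntegral_mono_on hint_m hint_small measurableSet_Ioo fun u hu => ?_
      have hu0 : 0 < u := lt_trans ht hu.1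
      have hfu : m ≤ |f u| := by
        have := hvar u ⟨hu.1.le, hu.2.le⟩
        have htri : |f t| - |f u| ≤ |f t - f u| := by
          have := abs_sub_abs_le_abs_sub (f t) (f u); linarith
        simp only [hmdef]; linarith
      gcongr
    have step2 : (∫ u in Set.Ioo t (2*t), |f u| / u) ≤ I := by
      refine setIntegral_mono_set hint_big ?_ (HasSubset.Subset.eventuallyLE hsubset)
      refine (ae_restrict_iff' measurableSet_Ioo).mpr (ae_of_all _ fun s hs => ?_)
      exact div_nonneg (abs_nonneg _) (le_of_lt (lt_trans ha hs.1))
    have step0 : (∫ u in Set.Ioo t (2*t), m / u) = m * Real.log 2 := by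
      rw [← MeasureTheory.integral_Ioc_eq_integral_Ioo,
        ← intervalIntegral.integral_of_le (by linarith : t ≤ 2*t)]
      have h0 : (0:ℝ) ∉ Set.uIcc t (2*t) := by
        rw [Set.uIcc_of_le (by linarith : t ≤ 2*t)]
        intro h; exact absurd h.1 (not_le.mpr ht)
      calc (∫ u in t..(2*t), m / u) = ∫ u in t..(2*t), m * (1/u) := by
            congr 1; ext u; ring
        _ = m * ∫ u in t..(2*t), 1/u := intervalIntegral.integral_const_mul _ _
        _ = m * Real.log ((2*t)/t) := by rw [integral_one_div h0]
        _ = m * Real.log 2 := by rw [mul_div_assoc, div_self (ne_of_gt ht), mul_one]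
    have hkey : m * Real.log 2 ≤ I := by
      rw [← step0]; exact le_trans step1 step2
    have hmle : m ≤ I / Real.log 2 := (le_div_iff₀ hlog).mpr hkey
    have : |f t| = m + C * I := by simp [hmdef]
    rw [this]
    have : (C + 1 / Real.log 2) * I = C * I + I / Real.log 2 := by ring
    rw [this]
    linarith
end

section
/- Let (a_n)_{n≥0} be a real-valued general monotone sequence with constants C > 1 and λ > 1, and define the step function f : (0,∞) → ℝ by f(x) = a_n for x ∈ (n, n+1], n ∈ ℕ ∪ {0}. Then f is general monotone (with possibly different constants), and moreover the limit of ∫_0^N f(t) dt as N → ∞ exists if and only if the series ∑_{n=0}^∞ a_n converges. -/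
open MeasureTheory Filter Set

/-- The step function associated to a sequence: `f(x) = a_n` for `x ∈ (n, n+1]`. -/
noncomputable def stepFun (a : ℕ → ℝ) : ℝ → ℝ := fun x => a (⌈x⌉₊ - 1)

/-!
On `(n, n + 1]` the step function `f` equals `a n`, so for `x ∈ (m, m + 1]` the variation of `f`
over `[x, 2x]` is at most `∑_{k=m}^{2m} |a k - a (k+1)|`. For `m ≥ 1` the GM condition of the
sequence bounds this by `C ∑_{m/l ≤ k ≤ l m} |a k| / k`, and `|a k| / k ≤ 2 ∫_k^{k+1} |f t| / t`;
once `L = 2^ν ≥ max 4 (2l)` all these unit intervals lie in `(x/L, L x)`, which gives the GM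
condition for `f` with constant `2C`. For `x ≤ 1` the variation is `0` or `|a 0 - a 1|`, bounded
directly. Finally `∫_0^N f = ∑_{k<⌊N⌋} a k + (N - ⌊N⌋) a ⌊N⌋`, whose last term tends to `0`
because `a n → 0`.
-/

open scoped Function Topology

theorem eVariationOn_Icc_nat {E : Type*} [PseudoEMetricSpace E] (f : ℕ → E) {m n : ℕ}
    (hmn : m ≤ n) :
    eVariationOn f (Icc m n) = ∑ k ∈ Finset.Ico m n, edist (f k) (f (k + 1)) := by
  obtain ⟨d, rfl⟩ := Nat.exists_eq_add_of_le hmn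
  have hpair : ∀ k : ℕ, Icc k (k + 1) = {k, k + 1} := fun k => by ext; simp; omega
  have := eVariationOn.sum' f (I := (m + ·)) (fun i j hij => by simpa using hij) (n := d)
  rw [add_zero] at this
  rw [← this, Finset.sum_Ico_eq_sum_range, add_tsub_cancel_left]
  simp only [← add_assoc, hpair, eVariationOn.pair]

lemma mul_sub_div_le_setIntegral_abs_div {f : ℝ → ℝ} {c α β : ℝ} (hα : 0 < α) (hαβ : α ≤ β)
    (hf : EqOn f (fun _ => c) (Ioo α β)) :
    |c| * ((β - α) / β) ≤ ∫ t in Ioo α β, |f t| / t := by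
  have hint : IntegrableOn (fun t => |c| / t) (Ioo α β) :=
    (continuousOn_const.div continuousOn_id fun t ht => (hα.trans_le ht.1).ne').integrableOn_Icc
      |>.mono_set Ioo_subset_Icc_self
  rw [setIntegral_congr_fun measurableSet_Ioo (g := fun t => |c| / t) fun t ht => by
    simp only [hf ht]]
  calc |c| * ((β - α) / β) = ∫ _ in Ioo α β, |c| / β := by
        rw [setIntegral_const, Real.volume_real_Ioo_of_le hαβ, smul_eq_mul]; ring
    _ ≤ ∫ t in Ioo α β, |c| / t :=
        setIntegral_mono_on (integrableOn_const measure_Ioo_lt_top.ne) hint measurableSet_Ioo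
          fun t ht => div_le_div_of_nonneg_left (abs_nonneg c) (hα.trans ht.1) ht.2.le

lemma sum_setIntegral_le_setIntegral {X ι : Type*} [MeasurableSpace X] {μ : Measure X}
    {f : X → ℝ} {s : Set X} {K : Finset ι} {S : ι → Set X} (hf : IntegrableOn f s μ)
    (hf0 : 0 ≤ᵐ[μ.restrict s] f) (hS : ∀ i ∈ K, MeasurableSet (S i))
    (hdisj : Set.Pairwise K (Disjoint on S)) (hSs : ∀ i ∈ K, S i ⊆ s) :
    ∑ i ∈ K, ∫ x in S i, f x ∂μ ≤ ∫ x in s, f x ∂μ := by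
  rw [← integral_biUnion_finset K hS hdisj fun i hi => hf.mono_set (hSs i hi)]
  exact setIntegral_mono_set hf hf0 (iUnion₂_subset hSs).eventuallyLE

lemma tendsto_stepFun {a : ℕ → ℝ} (ha : Tendsto a atTop (𝓝 0)) :
    Tendsto (stepFun a) atTop (𝓝 0) :=
  ha.comp ((tendsto_sub_atTop_nat 1).comp tendsto_nat_ceil_atTop)

section stepFun

variable (a : ℕ → ℝ)

lemma stepFun_eq_of_mem_Ioc {n : ℕ} {t : ℝ} (ht : t ∈ Ioc (n : ℝ) (n + 1)) :
    stepFun a t = a n := by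
  have : ⌈t⌉₊ = n + 1 := by
    rw [Nat.ceil_eq_iff n.succ_ne_zero]
    exact_mod_cast ht
  simp [stepFun, this]

lemma measurable_stepFun : Measurable (stepFun a) :=
  measurable_from_top.comp (Nat.measurable_ceil.sub measurable_const)

lemma abs_stepFun_le_of_le {t b : ℝ} (htb : t ≤ b) :
    |stepFun a t| ≤ ∑ k ∈ Finset.range (⌈b⌉₊ + 1), |a k| :=
  Finset.single_le_sum (f := fun k => |a k|) (fun _ _ => abs_nonneg _)
    (Finset.mem_range.2 (by have := Nat.ceil_le_ceil htb; omega))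

lemma eVariationOn_stepFun_le_sum {s : Set ℝ} {p q : ℕ} (hpq : p ≤ q)
    (hs : s ⊆ Ioc (p : ℝ) (q + 1)) :
    eVariationOn (stepFun a) s ≤ ∑ k ∈ Finset.Ico p q, edist (a k) (a (k + 1)) := by
  rw [← eVariationOn_Icc_nat a hpq]
  have hmono : Monotone fun t : ℝ => ⌈t⌉₊ - 1 :=
    fun _ _ h => Nat.sub_le_sub_right (Nat.ceil_le_ceil h) 1
  refine eVariationOn.comp_le_of_monotoneOn a _ (hmono.monotoneOn s) fun t ht => ?_
  have h1 : p < ⌈t⌉₊ := Nat.lt_ceil.2 (hs ht).1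
  have h2 : ⌈t⌉₊ ≤ q + 1 := Nat.ceil_le.2 (by exact_mod_cast (hs ht).2)
  exact ⟨by omega, by omega⟩

lemma locallyBoundedVariationOn_stepFun : LocallyBoundedVariationOn (stepFun a) (Ioi 0) := by
  intro x y _ _
  refine ne_top_of_le_ne_top ?_ (eVariationOn_stepFun_le_sum a (Nat.zero_le ⌈y⌉₊) fun t ht =>
    ⟨by exact_mod_cast ht.1, ht.2.2.trans ((Nat.le_ceil y).trans (by linarith))⟩)
  exact (ENNReal.sum_lt_top.2 fun _ _ => edist_lt_top _ _).ne

lemma eVariationOn_stepFun_Icc_two_mul_le {m : ℕ} {x : ℝ} (hmx : (m : ℝ) < x)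
    (hxm : x ≤ m + 1) :
    eVariationOn (stepFun a) (Icc x (2 * x)) ≤
      ENNReal.ofReal (∑ k ∈ Finset.Icc m (2 * m), |a k - a (k + 1)|) := by
  have hs : Icc x (2 * x) ⊆ Ioc (m : ℝ) ((2 * m + 1 : ℕ) + 1) := fun t ht =>
    ⟨hmx.trans_le ht.1, by push_cast; linarith [ht.2]⟩
  refine (eVariationOn_stepFun_le_sum a (by omega) hs).trans_eq ?_
  rw [Finset.Ico_add_one_right_eq_Icc, ENNReal.ofReal_sum_of_nonneg fun _ _ => abs_nonneg _]
  simp only [edist_dist, Real.dist_eq]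

lemma intervalIntegrable_stepFun (c d : ℝ) : IntervalIntegrable (stepFun a) volume c d := by
  rw [intervalIntegrable_iff]
  refine Measure.integrableOn_of_bounded measure_Ioc_lt_top.ne
    (measurable_stepFun a).aestronglyMeasurable (M := ∑ k ∈ Finset.range (⌈max c d⌉₊ + 1), |a k|)
    ((ae_restrict_iff' measurableSet_uIoc).2 (ae_of_all _ fun t ht => ?_))
  exact abs_stepFun_le_of_le a ht.2

lemma integrableOn_abs_stepFun_div {α β : ℝ} (hα : 0 < α) :
    IntegrableOn (fun t => |stepFun a t| / t) (Ioo α β) := by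
  refine Measure.integrableOn_of_bounded measure_Ioo_lt_top.ne
    ((measurable_stepFun a).abs.div measurable_id).aestronglyMeasurable
    (M := (∑ k ∈ Finset.range (⌈β⌉₊ + 1), |a k|) / α)
    ((ae_restrict_iff' measurableSet_Ioo).2 (ae_of_all _ fun t ht => ?_))
  have ht0 : 0 < t := hα.trans ht.1
  rw [Real.norm_eq_abs, abs_div, abs_abs, abs_of_pos ht0]
  exact div_le_div₀ (Finset.sum_nonneg fun _ _ => abs_nonneg _)
    (abs_stepFun_le_of_le a ht.2.le) hα ht.1.le

lemma ae_nonneg_abs_stepFun_div {α β : ℝ} (hα : 0 ≤ α) :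
    0 ≤ᵐ[volume.restrict (Ioo α β)] fun t => |stepFun a t| / t :=
  (ae_restrict_iff' measurableSet_Ioo).2 (ae_of_all _ fun _ ht =>
    div_nonneg (abs_nonneg _) (hα.trans ht.1.le))

lemma abs_div_le_two_mul_setIntegral {k : ℕ} (hk : 1 ≤ k) :
    |a k| / k ≤ 2 * ∫ t in Ioo (k : ℝ) (k + 1), |stepFun a t| / t := by
  have hk' : (1 : ℝ) ≤ k := by exact_mod_cast hk
  have h := mul_sub_div_le_setIntegral_abs_div (c := a k) (by positivity) (by linarith)
    fun t ht => stepFun_eq_of_mem_Ioc a ⟨ht.1, ht.2.le⟩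
  have hle : |a k| / k ≤ 2 * (|a k| * ((k + 1 - k) / (k + 1))) := by
    rw [add_sub_cancel_left, ← mul_div_assoc, mul_one, ← mul_div_assoc,
      div_le_div_iff₀ (by positivity) (by positivity)]
    nlinarith [abs_nonneg (a k)]
  linarith

lemma sum_abs_div_le_two_mul_setIntegral {p q : ℕ} {α β : ℝ} (hp : 1 ≤ p) (hα : 0 < α)
    (hαp : α ≤ p) (hqβ : (q : ℝ) + 1 ≤ β) :
    ∑ k ∈ Finset.Icc p q, |a k| / k ≤ 2 * ∫ t in Ioo α β, |stepFun a t| / t := by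
  have hdisj : Set.Pairwise (Finset.Icc p q : Set ℕ)
      (Disjoint on fun k : ℕ => Ioo (k : ℝ) (k + 1)) := fun i _ j _ hij => by
    simpa using Set.pairwise_disjoint_Ioo_intCast ℝ (Nat.cast_injective.ne hij : (i : ℤ) ≠ j)
  have hsub : ∀ k ∈ Finset.Icc p q, Ioo (k : ℝ) (k + 1) ⊆ Ioo α β := fun k hk => by
    obtain ⟨hpk, hkq⟩ := Finset.mem_Icc.1 hk
    refine Ioo_subset_Ioo (hαp.trans (by exact_mod_cast hpk)) (le_trans ?_ hqβ)
    exact_mod_cast Nat.add_le_add_right hkq 1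
  calc ∑ k ∈ Finset.Icc p q, |a k| / k
      ≤ ∑ k ∈ Finset.Icc p q, 2 * ∫ t in Ioo (k : ℝ) (k + 1), |stepFun a t| / t :=
        Finset.sum_le_sum fun k hk =>
          abs_div_le_two_mul_setIntegral a (hp.trans (Finset.mem_Icc.1 hk).1)
    _ = 2 * ∑ k ∈ Finset.Icc p q, ∫ t in Ioo (k : ℝ) (k + 1), |stepFun a t| / t :=
        (Finset.mul_sum ..).symm
    _ ≤ 2 * ∫ t in Ioo α β, |stepFun a t| / t := by
        gcongr
        exact sum_setIntegral_le_setIntegral (integrableOn_abs_stepFun_div a hα)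
          (ae_nonneg_abs_stepFun_div a hα.le) (fun _ _ => measurableSet_Ioo) hdisj hsub

lemma abs_sub_le_two_mul_setIntegral {x L : ℝ} (hx : 1 / 2 < x) (hx1 : x ≤ 1) (hL : 4 ≤ L) :
    |a 0 - a 1| ≤ 2 * ∫ t in Ioo (x / L) (L * x), |stepFun a t| / t := by
  have h0 : |a 0| * ((1 - 1 / 2) / 1) ≤ ∫ t in Ioo (1 / 2 : ℝ) 1, |stepFun a t| / t :=
    mul_sub_div_le_setIntegral_abs_div (by norm_num) (by norm_num) fun t ht =>
      stepFun_eq_of_mem_Ioc a (n := 0) ⟨by simp; linarith [ht.1], by simp; linarith [ht.2]⟩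
  have h1 := abs_div_le_two_mul_setIntegral a le_rfl
  norm_num at h0 h1
  have hxL : 0 < x / L := by positivity
  have hsplit : (∫ t in Ioo (1 / 2 : ℝ) 1, |stepFun a t| / t) + ∫ t in Ioo (1 : ℝ) 2,
      |stepFun a t| / t ≤ ∫ t in Ioo (x / L) (L * x), |stepFun a t| / t := by
    rw [← setIntegral_union (Iio_disjoint_Ioi_same.mono Ioo_subset_Iio_self Ioo_subset_Ioi_self)
      measurableSet_Ioo (integrableOn_abs_stepFun_div a (by norm_num))
      (integrableOn_abs_stepFun_div a one_pos)]
    refine setIntegral_mono_set (integrableOn_abs_stepFun_div a hxL)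
      (ae_nonneg_abs_stepFun_div a hxL.le) (union_subset ?_ ?_).eventuallyLE
    · refine Ioo_subset_Ioo ?_ (by nlinarith)
      rw [div_le_iff₀ (by positivity)]; nlinarith
    · exact Ioo_subset_Ioo ((div_le_one₀ (by positivity)).2 (by linarith)) (by nlinarith)
  linarith [abs_sub (a 0) (a 1)]

lemma GMSeq.sum_abs_sub_le {C l : ℝ} (hC : 0 ≤ C) (hl : 0 < l) (hGM : GMSeq C l a) {m : ℕ}
    (hm : 1 ≤ m) {x L : ℝ} (hmx : (m : ℝ) < x) (hxm : x ≤ m + 1) (hL : 4 ≤ L)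
    (hLl : 2 * l ≤ L) :
    ∑ k ∈ Finset.Icc m (2 * m), |a k - a (k + 1)| ≤
      2 * C * ∫ t in Ioo (x / L) (L * x), |stepFun a t| / t := by
  have hm' : (1 : ℝ) ≤ m := by exact_mod_cast hm
  have hL0 : 0 < L := by linarith
  have hlow : x / L ≤ ⌈(m : ℝ) / l⌉₊ :=
    calc x / L ≤ m / l := by rw [div_le_div_iff₀ (by positivity) hl]; nlinarith
      _ ≤ ⌈(m : ℝ) / l⌉₊ := Nat.le_ceil _
  have hhigh : (⌊l * m⌋₊ : ℝ) + 1 ≤ L * x := by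
    have := Nat.floor_le (by positivity : 0 ≤ l * m)
    nlinarith
  calc ∑ k ∈ Finset.Icc m (2 * m), |a k - a (k + 1)|
      ≤ C * ∑ k ∈ Finset.Icc ⌈(m : ℝ) / l⌉₊ ⌊l * (m : ℝ)⌋₊, |a k| / k := hGM.2 m hm
    _ ≤ C * (2 * ∫ t in Ioo (x / L) (L * x), |stepFun a t| / t) := by
        gcongr
        exact sum_abs_div_le_two_mul_setIntegral a
          (Nat.one_le_ceil_iff.2 (div_pos (by linarith) hl)) (div_pos (by linarith) hL0) hlow hhigh
    _ = 2 * C * ∫ t in Ioo (x / L) (L * x), |stepFun a t| / t := by ring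

lemma GMSeq.eVariationOn_stepFun_le {C l : ℝ} (hC : 1 ≤ C) (hl : 0 < l) (hGM : GMSeq C l a)
    {L : ℝ} (hL : 4 ≤ L) (hLl : 2 * l ≤ L) {x : ℝ} (hx : 0 < x) :
    eVariationOn (stepFun a) (Icc x (2 * x)) ≤
      ENNReal.ofReal (2 * C * ∫ t in Ioo (x / L) (L * x), |stepFun a t| / t) := by
  rcases le_or_gt (2 * x) 1 with hx2 | hx2
  · have hs : Icc x (2 * x) ⊆ Ioc ((0 : ℕ) : ℝ) ((0 : ℕ) + 1) := fun t ht =>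
      ⟨by push_cast; linarith [ht.1], by push_cast; linarith [ht.2]⟩
    have := eVariationOn_stepFun_le_sum a le_rfl hs
    rw [Finset.Ico_self, Finset.sum_empty, nonpos_iff_eq_zero] at this
    simp [this]
  obtain ⟨m, hmx, hxm⟩ : ∃ m : ℕ, (m : ℝ) < x ∧ x ≤ m + 1 := by
    have hceil : ⌈x⌉₊ ≠ 0 := (Nat.ceil_pos.2 hx).ne'
    refine ⟨⌈x⌉₊ - 1, ((Nat.ceil_eq_iff hceil).1 rfl).1, ?_⟩
    rw [← Nat.cast_add_one, Nat.sub_add_cancel (Nat.one_le_iff_ne_zero.2 hceil)]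
    exact Nat.le_ceil x
  refine (eVariationOn_stepFun_Icc_two_mul_le a hmx hxm).trans (ENNReal.ofReal_le_ofReal ?_)
  rcases Nat.eq_zero_or_pos m with rfl | hm
  · have hI := integral_nonneg_of_ae
      (ae_nonneg_abs_stepFun_div a (β := L * x) (by positivity : 0 ≤ x / L))
    have := abs_sub_le_two_mul_setIntegral a (x := x) (by linarith) (by simpa using hxm) hL
    simp only [mul_zero, Finset.Icc_self, Finset.sum_singleton, zero_add]
    nlinarith
  · exact hGM.sum_abs_sub_le a (by linarith) hl hm hmx hxm hL hLl

theorem GMSeq.gmFun_stepFun {C l : ℝ} (hC : 1 < C) (hl : 0 < l) (hGM : GMSeq C l a) :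
    ∃ C' : ℝ, 1 < C' ∧ ∃ ν : ℕ, 1 ≤ ν ∧ GMFun C' (2 ^ ν) (stepFun a) := by
  obtain ⟨ν, hν⟩ := pow_unbounded_of_one_lt (2 * l + 4) (one_lt_two : (1 : ℝ) < 2)
  have hν1 : 1 ≤ ν := Nat.one_le_iff_ne_zero.2 (by rintro rfl; norm_num at hν; linarith)
  exact ⟨2 * C, by linarith, ν, hν1, locallyBoundedVariationOn_stepFun a, tendsto_stepFun hGM.1,
    fun x hx => hGM.eVariationOn_stepFun_le a hC.le hl (by linarith) (by linarith) hx⟩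

lemma integral_stepFun_of_le {n : ℕ} {N : ℝ} (h1 : (n : ℝ) ≤ N) (h2 : N ≤ n + 1) :
    ∫ t in (n : ℝ)..N, stepFun a t = (N - n) * a n := by
  rw [intervalIntegral.integral_of_le h1, setIntegral_congr_fun measurableSet_Ioc
      fun t ht => stepFun_eq_of_mem_Ioc a ⟨ht.1, ht.2.trans h2⟩,
    setIntegral_const, Real.volume_real_Ioc_of_le h1, smul_eq_mul]

lemma integral_stepFun_natCast (n : ℕ) :
    ∫ t in (0 : ℝ)..n, stepFun a t = ∑ k ∈ Finset.range n, a k := by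
  have := intervalIntegral.sum_integral_adjacent_intervals (a := ((↑) : ℕ → ℝ)) (n := n)
    fun k _ => intervalIntegrable_stepFun a k (k + 1 : ℕ)
  rw [Nat.cast_zero] at this
  rw [← this]
  refine Finset.sum_congr rfl fun k _ => ?_
  rw [Nat.cast_add_one, integral_stepFun_of_le a (by linarith) le_rfl]
  ring

lemma integral_stepFun_eq {N : ℝ} (hN : 0 ≤ N) :
    ∫ t in (0 : ℝ)..N, stepFun a t = ∑ k ∈ Finset.range ⌊N⌋₊, a k + (N - ⌊N⌋₊) * a ⌊N⌋₊ := by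
  rw [← intervalIntegral.integral_add_adjacent_intervals (intervalIntegrable_stepFun a 0 ⌊N⌋₊)
      (intervalIntegrable_stepFun a _ N), integral_stepFun_natCast,
    integral_stepFun_of_le a (Nat.floor_le hN) (Nat.lt_floor_add_one N).le]

end stepFun

theorem exists_tendsto_integral_stepFun_iff {a : ℕ → ℝ} (ha : Tendsto a atTop (𝓝 0)) :
    (∃ I : ℝ, Tendsto (fun N : ℝ => ∫ t in (0 : ℝ)..N, stepFun a t) atTop (𝓝 I)) ↔
      ∃ S : ℝ, Tendsto (fun N : ℕ => ∑ n ∈ Finset.range N, a n) atTop (𝓝 S) := by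
  refine ⟨fun ⟨I, hI⟩ => ⟨I, ?_⟩, fun ⟨S, hS⟩ => ⟨S, ?_⟩⟩
  · exact (hI.comp tendsto_natCast_atTop_atTop).congr (integral_stepFun_natCast a)
  have hfloor : Tendsto (fun N : ℝ => ⌊N⌋₊) atTop atTop := tendsto_nat_floor_atTop
  have hfrac_bdd : IsBoundedUnder (· ≤ ·) atTop (norm ∘ fun N : ℝ => N - ⌊N⌋₊) :=
    isBoundedUnder_of_eventually_le (a := 1) <| (eventually_ge_atTop 0).mono fun N hN => by
      rw [Function.comp_apply, Real.norm_eq_abs,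
        abs_of_nonneg (sub_nonneg.2 (Nat.floor_le hN))]
      linarith [Nat.lt_floor_add_one N]
  have hlim :=
    (hS.comp hfloor).add (isBoundedUnder_le_mul_tendsto_zero hfrac_bdd (ha.comp hfloor))
  rw [add_zero] at hlim
  exact hlim.congr' ((eventually_ge_atTop 0).mono fun N hN => (integral_stepFun_eq a hN).symm)

/-- If `(a_n)` is a real-valued general monotone sequence, then the step function
`f(x) = a_n` for `x ∈ (n, n+1]` is a general monotone function (with possibly different
constants), and `∫_0^∞ f(t) dt` converges if and only if `∑ a_n` converges. -/
theorem stepFun_GM_and_integral_iff_sum (a : ℕ → ℝ) (C l : ℝ) (hC : 1 < C) (hl : 1 < l)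
    (hGM : GMSeq C l a) :
    (∃ C' : ℝ, 1 < C' ∧ ∃ ν : ℕ, 1 ≤ ν ∧ GMFun C' (2^ν) (stepFun a)) ∧
    ((∃ I : ℝ, Tendsto (fun N : ℝ => ∫ t in (0:ℝ)..N, stepFun a t) atTop (nhds I)) ↔
     (∃ S : ℝ, Tendsto (fun N : ℕ => ∑ n ∈ Finset.range N, a n) atTop (nhds S))) :=
  ⟨hGM.gmFun_stepFun a hC (by linarith), exists_tendsto_integral_stepFun_iff hGM.1⟩
end

section
/- The series ∑_{n=1}^∞ (−1)^n cos((2n−1)x)/(2n−1) converges for every x ∈ ℝ and its sum function is bounded on ℝ, but the partial sums x ↦ ∑_{n=1}^N (−1)^n cos((2n−1)x)/(2n−1) do not converge uniformly on ℝ as N → ∞. Consequently, boundedness of the sum of a cosine series does not imply uniform convergence of its partial sums. -/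
/-!
The derivative of the `N`-th partial sum is `-∑ (-1)^n sin((2n-1)t)`, and multiplying this sum by
`2 cos t` telescopes it to `(-1)^N sin(2Nt)`. Hence for `|x| < π/2` the partial sum at `x` differs
from the one at `0` by `±∫₀ˣ sin(2Nt) / (2 cos t) dt`, which tends to `0` by the Riemann–Lebesgue
lemma, while at `0` the partial sums are Leibniz's series for `-π/4`. Both sides change sign
under `x ↦ x + π`, so the series converges everywhere to `-(π/4) sign(cos x)`. This limit jumps at
`π/2`, whereas uniform limits of the continuous partial sums are continuous.
-/

open Filter Real MeasureTheory Set
open scoped Topology FourierTransform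

theorem tendsto_integral_sin_mul_cocompact {f : ℝ → ℝ} (hf : Integrable f) :
    Tendsto (fun w : ℝ => ∫ t, sin (w * t) * f t) (cocompact ℝ) (𝓝 0) := by
  have hscale : Tendsto (fun w : ℝ => -(2 * π)⁻¹ * w) (cocompact ℝ) (cocompact ℝ) :=
    tendsto_cocompact_mul_left₀ (by simp [pi_ne_zero])
  have h := (Complex.continuous_im.tendsto 0).comp
    ((Real.tendsto_integral_exp_smul_cocompact fun t => (f t : ℂ)).comp hscale)
  rw [Complex.zero_im] at h
  refine h.congr fun w => ?_
  -- `sin (w * t)` is the imaginary part of `𝐞 (t * w / (2π))`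
  have hint : Integrable (fun t : ℝ => 𝐞 (-(t * (-(2 * π)⁻¹ * w))) • (f t : ℂ)) := by
    have hc : Continuous fun t : ℝ => 𝐞 (-(t * (-(2 * π)⁻¹ * w))) := by fun_prop
    have hf' := hf.ofReal (𝕜 := ℂ)
    refine (integrable_norm_iff (hc.aestronglyMeasurable.fun_smul hf'.1)).mp ?_
    simpa only [Circle.norm_smul] using hf'.norm
  rw [Function.comp_apply, Function.comp_apply, ← Complex.imCLM_apply,
    ← Complex.imCLM.integral_comp_comm hint]
  congr 1 with t
  rw [Complex.imCLM_apply, Circle.smul_def, Real.fourierChar_apply, smul_eq_mul,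
    Complex.im_mul_ofReal, Complex.exp_ofReal_mul_I_im]
  field_simp

theorem tendsto_intervalIntegral_sin_mul_cocompact {f : ℝ → ℝ} {a b : ℝ}
    (hf : IntervalIntegrable f volume a b) :
    Tendsto (fun w : ℝ => ∫ t in a..b, sin (w * t) * f t) (cocompact ℝ) (𝓝 0) := by
  rw [tendsto_zero_iff_norm_tendsto_zero]
  simp_rw [intervalIntegral.norm_integral_eq_norm_integral_uIoc,
    ← integral_indicator measurableSet_uIoc, indicator_mul_right]
  simpa only [norm_zero] using (tendsto_integral_sin_mul_cocompact
    ((integrable_indicator_iff measurableSet_uIoc).2 (intervalIntegrable_iff.1 hf))).norm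

theorem Function.Antiperiodic.tendsto_of_forall_mem_Ioc {ι α β : Type*}
    [AddCommGroup α] [LinearOrder α] [IsOrderedAddMonoid α] [Archimedean α]
    [AddCommGroup β] [TopologicalSpace β] [IsTopologicalAddGroup β] {l : Filter ι}
    {F : ι → α → β} {g : α → β} {c : α} (hc : 0 < c)
    (hF : ∀ i, Function.Antiperiodic (F i) c) (hg : Function.Antiperiodic g c) (a : α)
    (h : ∀ y ∈ Ioc a (a + c), Tendsto (fun i => F i y) l (𝓝 (g y))) (x : α) :
    Tendsto (fun i => F i x) l (𝓝 (g x)) := by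
  rw [← toIocMod_add_toIocDiv_zsmul hc a x, hg.add_zsmul_eq]
  simp_rw [(hF _).add_zsmul_eq]
  exact (h _ (toIocMod_mem_Ioc hc a x)).const_smul _

theorem sum_neg_one_pow_mul_sin_odd_mul_two_cos (N : ℕ) (t : ℝ) :
    (∑ n ∈ Finset.Icc 1 N, (-1 : ℝ) ^ n * sin ((2 * n - 1) * t)) * (2 * cos t)
      = (-1) ^ N * sin (2 * N * t) := by
  induction N with
  | zero => simp
  | succ N ih =>
    rw [Finset.sum_Icc_succ_top (by omega), add_mul, ih]
    push_cast
    have h₁ : sin ((2 * (N + 1) - 1) * t) * (2 * cos t)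
        = sin (2 * (N + 1) * t) + sin (2 * N * t) := by
      have e₁ : 2 * ((N : ℝ) + 1) * t = (2 * (N + 1) - 1) * t + t := by ring
      have e₂ : 2 * (N : ℝ) * t = (2 * (N + 1) - 1) * t - t := by ring
      rw [e₁, e₂, sin_add, sin_sub]
      ring
    linear_combination (-1 : ℝ) ^ (N + 1) * h₁

noncomputable def oddCosPartialSum (N : ℕ) (x : ℝ) : ℝ :=
  ∑ n ∈ Finset.Icc 1 N, (-1 : ℝ) ^ n * cos ((2 * n - 1) * x) / (2 * n - 1)

noncomputable def oddCosSum (x : ℝ) : ℝ := -(π / 4) * Real.sign (cos x)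

theorem hasDerivAt_oddCosPartialSum (N : ℕ) (t : ℝ) :
    HasDerivAt (oddCosPartialSum N)
      (-∑ n ∈ Finset.Icc 1 N, (-1 : ℝ) ^ n * sin ((2 * n - 1) * t)) t := by
  rw [← Finset.sum_neg_distrib]
  refine HasDerivAt.fun_sum fun n hn => ?_
  have hne : (2 * n - 1 : ℝ) ≠ 0 := by
    have : (1 : ℝ) ≤ n := by exact_mod_cast (Finset.mem_Icc.1 hn).1
    linarith
  have hcos := ((hasDerivAt_id t).const_mul (2 * n - 1 : ℝ)).cos
  refine ((hcos.const_mul ((-1 : ℝ) ^ n)).div_const (2 * n - 1 : ℝ)).congr_deriv ?_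
  rw [id, mul_one]
  field_simp

theorem continuous_oddCosPartialSum (N : ℕ) : Continuous (oddCosPartialSum N) := by
  unfold oddCosPartialSum
  fun_prop

theorem cos_pos_of_mem_uIcc_zero {x t : ℝ} (hx : x ∈ Ioo (-(π / 2)) (π / 2))
    (ht : t ∈ uIcc 0 x) : 0 < cos t :=
  cos_pos_of_mem_Ioo <| ordConnected_Ioo.uIcc_subset (by constructor <;> linarith [pi_pos]) hx ht

theorem continuousOn_inv_two_mul_cos {x : ℝ} (hx : x ∈ Ioo (-(π / 2)) (π / 2)) :
    ContinuousOn (fun t => (2 * cos t)⁻¹) (uIcc 0 x) :=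
  ContinuousOn.inv₀ (by fun_prop) fun _ ht =>
    (mul_pos two_pos (cos_pos_of_mem_uIcc_zero hx ht)).ne'

theorem oddCosPartialSum_sub_oddCosPartialSum_zero (N : ℕ) {x : ℝ}
    (hx : x ∈ Ioo (-(π / 2)) (π / 2)) :
    oddCosPartialSum N x - oddCosPartialSum N 0
      = -(-1) ^ N * ∫ t in (0 : ℝ)..x, sin (2 * N * t) * (2 * cos t)⁻¹ := by
  rw [← intervalIntegral.integral_const_mul]
  refine (intervalIntegral.integral_eq_sub_of_hasDerivAt (fun t ht => ?_) ?_).symm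
  · have hsum := (eq_mul_inv_iff_mul_eq₀ (mul_pos two_pos
      (cos_pos_of_mem_uIcc_zero hx ht)).ne').2 (sum_neg_one_pow_mul_sin_odd_mul_two_cos N t)
    exact (hasDerivAt_oddCosPartialSum N t).congr_deriv (by rw [hsum]; ring)
  · exact (continuousOn_const.mul
      ((by fun_prop : Continuous fun t => sin (2 * N * t)).continuousOn.mul
        (continuousOn_inv_two_mul_cos hx))).intervalIntegrable

theorem tendsto_oddCosPartialSum_zero :
    Tendsto (fun N => oddCosPartialSum N 0) atTop (𝓝 (-(π / 4))) := by
  refine Real.tendsto_sum_pi_div_four.neg.congr fun N => ?_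
  rw [oddCosPartialSum, ← Finset.sum_neg_distrib, ← Finset.Ico_add_one_right_eq_Icc,
    Finset.sum_Ico_eq_sum_range]
  refine Finset.sum_congr rfl fun i _ => ?_
  simp only [mul_zero, cos_zero]
  push_cast
  ring

theorem tendsto_oddCosPartialSum_of_mem_Ioo {x : ℝ} (hx : x ∈ Ioo (-(π / 2)) (π / 2)) :
    Tendsto (fun N => oddCosPartialSum N x) atTop (𝓝 (-(π / 4))) := by
  have hfreq : Tendsto (fun N : ℕ => (2 * N : ℝ)) atTop (cocompact ℝ) :=
    (tendsto_natCast_atTop_atTop.const_mul_atTop two_pos).mono_right atTop_le_cocompact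
  have hI := (tendsto_intervalIntegral_sin_mul_cocompact
    (continuousOn_inv_two_mul_cos hx).intervalIntegrable).comp hfreq
  have hrem : Tendsto
      (fun N : ℕ => -(-1) ^ N * ∫ t in (0 : ℝ)..x, sin (2 * N * t) * (2 * cos t)⁻¹)
      atTop (𝓝 0) := by
    rw [tendsto_zero_iff_norm_tendsto_zero] at hI ⊢
    simpa [norm_mul] using hI
  have h := tendsto_oddCosPartialSum_zero.add hrem
  rw [add_zero] at h
  refine h.congr fun N => ?_
  rw [← oddCosPartialSum_sub_oddCosPartialSum_zero N hx, add_sub_cancel]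

theorem oddCosPartialSum_pi_div_two (N : ℕ) : oddCosPartialSum N (π / 2) = 0 := by
  refine Finset.sum_eq_zero fun n _ => ?_
  rw [cos_eq_zero_iff.2 ⟨n - 1, by push_cast; ring⟩]
  ring

theorem oddCosPartialSum_antiperiodic (N : ℕ) :
    Function.Antiperiodic (oddCosPartialSum N) π := by
  intro x
  rw [oddCosPartialSum, oddCosPartialSum, ← Finset.sum_neg_distrib]
  refine Finset.sum_congr rfl fun n _ => ?_
  have harg : (2 * n - 1 : ℝ) * (x + π)
      = ((2 * n - 1) * x + π) + ((n : ℤ) - 1 : ℤ) * (2 * π) := by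
    push_cast
    ring
  rw [harg, cos_add_int_mul_two_pi, cos_add_pi]
  ring

theorem oddCosSum_antiperiodic : Function.Antiperiodic oddCosSum π := by
  intro x
  rw [oddCosSum, oddCosSum, cos_add_pi, Real.sign_neg, mul_neg]

theorem tendsto_oddCosPartialSum (x : ℝ) :
    Tendsto (fun N => oddCosPartialSum N x) atTop (𝓝 (oddCosSum x)) := by
  refine Function.Antiperiodic.tendsto_of_forall_mem_Ioc pi_pos oddCosPartialSum_antiperiodic
    oddCosSum_antiperiodic (-(π / 2)) (fun y hy => ?_) x
  rcases eq_or_lt_of_le hy.2 with hy_eq | hy_lt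
  · rw [show y = π / 2 by linarith, oddCosSum, cos_pi_div_two, Real.sign_zero, mul_zero]
    simp only [oddCosPartialSum_pi_div_two, tendsto_const_nhds]
  · have hy : y ∈ Ioo (-(π / 2)) (π / 2) := ⟨hy.1, by linarith⟩
    rw [oddCosSum, Real.sign_of_pos (cos_pos_of_mem_Ioo hy), mul_one]
    exact tendsto_oddCosPartialSum_of_mem_Ioo hy

theorem abs_oddCosSum_le (x : ℝ) : |oddCosSum x| ≤ π / 4 := by
  rw [oddCosSum, abs_mul, abs_neg, abs_of_pos (by positivity)]
  refine mul_le_of_le_one_right (by positivity) ?_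
  rcases Real.sign_apply_eq (cos x) with h | h | h <;> simp [h]

theorem not_continuousAt_oddCosSum_pi_div_two : ¬ ContinuousAt oddCosSum (π / 2) := by
  intro h
  have hleft : ∀ᶠ y in 𝓝[<] (π / 2), oddCosSum y = -(π / 4) := by
    filter_upwards [Ioo_mem_nhdsLT (by linarith [pi_pos] : -(π / 2) < π / 2)] with y hy
    rw [oddCosSum, Real.sign_of_pos (cos_pos_of_mem_Ioo hy), mul_one]
  have := tendsto_nhds_unique (h.tendsto.mono_left nhdsWithin_le_nhds)
    (tendsto_const_nhds.congr' (EventuallyEq.symm hleft))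
  rw [oddCosSum, cos_pi_div_two, Real.sign_zero, mul_zero] at this
  linarith [pi_pos]

/-- The cosine series `∑_{n=1}^∞ (−1)^n cos((2n−1)x)/(2n−1)` converges at every `x ∈ ℝ` to a
bounded sum function, yet its partial sums do not converge uniformly on `ℝ`. Hence
boundedness of the sum of a cosine series does not imply uniform convergence. -/
theorem bounded_cosine_series_not_uniformly_convergent :
    ∃ g : ℝ → ℝ,
      (∀ x : ℝ, Tendsto
        (fun N : ℕ => ∑ n ∈ Finset.Icc 1 N,
          (-1:ℝ)^n * Real.cos ((2*(n:ℝ)-1)*x) / (2*(n:ℝ)-1))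
        atTop (nhds (g x))) ∧
      (∃ M : ℝ, ∀ x : ℝ, |g x| ≤ M) ∧
      ¬ TendstoUniformly
        (fun (N : ℕ) (x : ℝ) => ∑ n ∈ Finset.Icc 1 N,
          (-1:ℝ)^n * Real.cos ((2*(n:ℝ)-1)*x) / (2*(n:ℝ)-1))
        g atTop :=
  ⟨oddCosSum, tendsto_oddCosPartialSum, ⟨π / 4, abs_oddCosSum_le⟩, fun h =>
    not_continuousAt_oddCosSum_pi_div_two
      ((h.continuous (.of_forall continuous_oddCosPartialSum)).continuousAt)⟩
end
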